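/- arXiv:1501.00076 — 9 statements merged into one kernel-verified Lean document; each statement's English description precedes it below -/
import Mathlib

section
/- The maximum number of k-term arithmetic progressions contained in an n-point subset of the real line equals (n-r)(n+r-k+1)/(2(k-1)), where r is the remainder when n is divided by k-1, and this maximum is attained by the set {0, 1, …, n-1}. -/
attribute [local instance] Classical.propDecidable

/-!
Number the points of `V` increasingly by `0, …, n - 1`. A `k`-term progression in `V` becomes a
strictly increasing index sequence `ι 0 < ⋯ < ι m` in `[0, N]`, where `m = k - 1`, `N = n - 1`.
Let `t < m` be the last position at which `ι` lies on or above the diagonal `s ↦ s N / m`, and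
extend `ι t, ι (t + 1)` to the integer progression `a + s e`. The defect `s ↦ m (a + s e) - s N`
is affine, nonnegative at `t` and negative at `t + 1` (or `t + 1 = m`), so it decreases: the
integer progression stays in `[0, N]`, and `t` is the unique sign change of the defect, hence is
determined by `(a, e)`. So `(a, e)` determines two consecutive terms of the original progression,
which gives an injection into the progressions of `{0, …, n - 1}`; these are counted directly as
`∑_{e ≥ 1} (n - m e)⁺`.
-/

open Finset

section ArithProg

variable {α : Type*} [Semiring α] [DecidableEq α]

def arithProg (k : ℕ) (a d : α) : Finset α :=
  (range k).image fun i : ℕ => a + (i : α) * d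

variable {k : ℕ} {a d y : α}

@[simp]
lemma mem_arithProg : y ∈ arithProg k a d ↔ ∃ i < k, a + i * d = y := by
  simp [arithProg]

lemma add_mul_mem_arithProg {i : ℕ} (hi : i < k) : a + i * d ∈ arithProg k a d :=
  mem_arithProg.2 ⟨i, hi, rfl⟩

end ArithProg

section OrderedArithProg

variable {α : Type*} [CommRing α] [LinearOrder α] [DecidableEq α]

noncomputable def kAPs (k : ℕ) (V : Finset α) : Finset (Finset α) :=
  (V.powersetCard k).filter fun P => ∃ a d : α, 0 < d ∧ P = arithProg k a d

variable [IsStrictOrderedRing α] {k : ℕ} {a d a' d' y : α}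

lemma card_arithProg (hd : d ≠ 0) : #(arithProg k a d) = k := by
  rw [arithProg, card_image_of_injective _ fun i j h => ?_, card_range]
  exact_mod_cast mul_right_cancel₀ hd (add_left_cancel h)

lemma bounds_of_mem_arithProg (hd : 0 ≤ d) (hy : y ∈ arithProg k a d) :
    a ≤ y ∧ y ≤ a + ((k - 1 : ℕ) : α) * d := by
  obtain ⟨i, hi, rfl⟩ := mem_arithProg.1 hy
  have hi' : (i : α) ≤ (k - 1 : ℕ) := by exact_mod_cast Nat.le_sub_one_of_lt hi
  constructor <;> nlinarith [(Nat.cast_nonneg i : (0 : α) ≤ i)]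

lemma eq_of_arithProg_eq (hk : 1 < k) (hd : 0 < d) (hd' : 0 < d')
    (h : arithProg k a d = arithProg k a' d') : a = a' ∧ d = d' := by
  have first (b e : α) : b ∈ arithProg k b e := by
    simpa using add_mul_mem_arithProg (a := b) (d := e) (by omega : 0 < k)
  have last (b e : α) : b + ((k - 1 : ℕ) : α) * e ∈ arithProg k b e :=
    add_mul_mem_arithProg (by omega)
  have ha : a = a' := le_antisymm
    (bounds_of_mem_arithProg hd.le (h ▸ first a' d')).1
    (bounds_of_mem_arithProg hd'.le (h ▸ first a d)).1
  subst ha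
  have hm : (0 : α) < (k - 1 : ℕ) := by exact_mod_cast (by omega : 0 < k - 1)
  refine ⟨rfl, le_antisymm ?_ ?_⟩
  · have := (bounds_of_mem_arithProg hd'.le (h ▸ last a d)).2
    nlinarith
  · have := (bounds_of_mem_arithProg hd.le (h ▸ last a d')).2
    nlinarith

end OrderedArithProg

section Rank

variable {α : Type*} [LinearOrder α] {V : Finset α} {y y' : α}

noncomputable def rank (V : Finset α) (y : α) : ℕ :=
  #(V.filter (· < y))

lemma rank_lt_card (hy : y ∈ V) : rank V y < #V :=
  card_lt_card (filter_ssubset.2 ⟨y, hy, lt_irrefl y⟩)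

lemma rank_lt_rank (hy : y ∈ V) (h : y < y') : rank V y < rank V y' := by
  refine card_lt_card ((ssubset_iff_of_subset fun x hx => ?_).2 ⟨y, ?_, ?_⟩)
  · simp only [mem_filter] at hx ⊢
    exact ⟨hx.1, hx.2.trans h⟩
  · simp [hy, h]
  · simp

lemma rank_injOn : Set.InjOn (rank V) V :=
  StrictMonoOn.injOn fun _ hy _ _ h => rank_lt_rank hy h

end Rank

section Crossing

variable {m N a e t t' i j : ℕ}

/-- The progression `s ↦ a + s e` crosses the diagonal `s ↦ s N / m` from above between the
positions `t` and `t + 1`. -/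
def IsCrossing (m N a e t : ℕ) : Prop :=
  t * N ≤ m * (a + t * e) ∧ (t + 1 < m → m * (a + (t + 1) * e) < (t + 1) * N)

lemma IsCrossing.le_of_isCrossing (h : IsCrossing m N a e t) (h' : IsCrossing m N a e t')
    (ht' : t' < m) : t' ≤ t := by
  by_contra! hlt
  obtain ⟨u, rfl⟩ := Nat.exists_eq_add_of_lt hlt
  have hbelow := h.2 (by omega)
  have hslope : m * e < N := by nlinarith
  have := h'.1
  nlinarith [Nat.mul_le_mul_left u hslope.le]

lemma IsCrossing.unique (h : IsCrossing m N a e t) (h' : IsCrossing m N a e t')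
    (ht : t < m) (ht' : t' < m) : t = t' :=
  le_antisymm (h'.le_of_isCrossing h ht) (h.le_of_isCrossing h' ht')

lemma intAP_bounds_of_crossing (ht : t < m) (hij : i ≤ j) (hj : j ≤ N) (hi : t * N ≤ m * i)
    (hj' : t + 1 < m → m * j < (t + 1) * N) :
    t * (j - i) ≤ i ∧ i - t * (j - i) + m * (j - i) ≤ N := by
  obtain ⟨e, rfl⟩ := Nat.exists_eq_add_of_le hij
  obtain ⟨u, rfl⟩ := Nat.exists_eq_add_of_lt ht
  rw [Nat.add_sub_cancel_left]
  have hstep : (t + u + 1) * (i + e) ≤ (t + 1) * N := by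
    rcases u with _ | u
    · nlinarith
    · exact (hj' (by omega)).le
  have hslope : (t + u + 1) * e ≤ N := by nlinarith
  have hte : t * e ≤ i := by
    refine Nat.le_of_mul_le_mul_left ?_ (by omega : 0 < t + u + 1)
    nlinarith [Nat.mul_le_mul_left t hslope]
  refine ⟨hte, ?_⟩
  suffices (t + u + 1) * (i + e + u * e) ≤ (t + u + 1) * N by
    have := Nat.le_of_mul_le_mul_left this (by omega)
    have : i - t * e + (t + u + 1) * e = i + e + u * e := by
      zify [hte]; ring
    omega
  nlinarith [Nat.mul_le_mul_left u hslope]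

end Crossing

section Pivot

variable {m N : ℕ} {ι ι' : ℕ → ℕ}

def pivot (m N : ℕ) (ι : ℕ → ℕ) : ℕ :=
  Nat.findGreatest (fun s => s * N ≤ m * ι s) (m - 1)

def toIntAP (m N : ℕ) (ι : ℕ → ℕ) : ℕ × ℕ :=
  let t := pivot m N ι
  (ι t - t * (ι (t + 1) - ι t), ι (t + 1) - ι t)

lemma pivot_lt (hm : 0 < m) : pivot m N ι < m :=
  (Nat.findGreatest_le _).trans_lt (by omega)

lemma pivot_spec :
    pivot m N ι * N ≤ m * ι (pivot m N ι) ∧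
      (pivot m N ι + 1 < m → m * ι (pivot m N ι + 1) < (pivot m N ι + 1) * N) := by
  refine ⟨Nat.findGreatest_spec (P := fun s => s * N ≤ m * ι s) (Nat.zero_le _) (by simp),
    fun h => ?_⟩
  exact not_le.1 (Nat.findGreatest_is_greatest (P := fun s => s * N ≤ m * ι s)
    (Nat.lt_succ_self _) (by omega))

lemma toIntAP_spec (hm : 0 < m) (hι : StrictMonoOn ι (Set.Iic m)) (hN : ι m ≤ N) :
    0 < (toIntAP m N ι).2 ∧ (toIntAP m N ι).1 + m * (toIntAP m N ι).2 ≤ N ∧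
      (toIntAP m N ι).1 + pivot m N ι * (toIntAP m N ι).2 = ι (pivot m N ι) ∧
      (toIntAP m N ι).1 + (pivot m N ι + 1) * (toIntAP m N ι).2 = ι (pivot m N ι + 1) := by
  have ht := pivot_lt (N := N) (ι := ι) hm
  have hspec := pivot_spec (m := m) (N := N) (ι := ι)
  simp only [toIntAP]
  generalize pivot m N ι = t at ht hspec ⊢
  have hij : ι t < ι (t + 1) :=
    hι (Set.mem_Iic.2 ht.le) (Set.mem_Iic.2 ht) (Nat.lt_succ_self t)
  have hj : ι (t + 1) ≤ N :=
    (hι.monotoneOn (Set.mem_Iic.2 ht) (Set.mem_Iic.2 le_rfl) ht).trans hN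
  obtain ⟨hte, hbound⟩ := intAP_bounds_of_crossing ht hij.le hj hspec.1 hspec.2
  refine ⟨by omega, hbound, by omega, ?_⟩
  rw [add_one_mul]
  omega

lemma isCrossing_toIntAP (hm : 0 < m) (hι : StrictMonoOn ι (Set.Iic m)) (hN : ι m ≤ N) :
    IsCrossing m N (toIntAP m N ι).1 (toIntAP m N ι).2 (pivot m N ι) := by
  obtain ⟨-, -, hi, hj⟩ := toIntAP_spec hm hι hN
  rw [IsCrossing, hi, hj]
  exact pivot_spec

lemma exists_eq_of_toIntAP_eq (hm : 0 < m) (hι : StrictMonoOn ι (Set.Iic m)) (hN : ι m ≤ N)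
    (hι' : StrictMonoOn ι' (Set.Iic m)) (hN' : ι' m ≤ N)
    (h : toIntAP m N ι = toIntAP m N ι') :
    ∃ t < m, ι t = ι' t ∧ ι (t + 1) = ι' (t + 1) := by
  have hpivot : pivot m N ι = pivot m N ι' := by
    refine (isCrossing_toIntAP hm hι hN).unique ?_ (pivot_lt hm) (pivot_lt hm)
    rw [h]
    exact isCrossing_toIntAP hm hι' hN'
  obtain ⟨-, -, hi, hj⟩ := toIntAP_spec hm hι hN
  obtain ⟨-, -, hi', hj'⟩ := toIntAP_spec hm hι' hN'
  rw [← h, ← hpivot] at hi' hj'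
  exact ⟨pivot m N ι, pivot_lt hm, hi.symm.trans hi', hj.symm.trans hj'⟩

end Pivot

section IntAPs

variable {m n : ℕ} {p : ℕ × ℕ}

def intAPs (m n : ℕ) : Finset (ℕ × ℕ) :=
  (range (n / m)).biUnion fun d => range (n - m * (d + 1)) ×ˢ {d + 1}

lemma mem_intAPs (hm : 0 < m) : p ∈ intAPs m n ↔ 0 < p.2 ∧ p.1 + m * p.2 < n := by
  obtain ⟨a, e⟩ := p
  simp only [intAPs, mem_biUnion, mem_range, mem_product, mem_singleton]
  constructor
  · rintro ⟨d, -, ha, rfl⟩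
    omega
  · rintro ⟨he, ha⟩
    have he' : e - 1 + 1 = e := by omega
    refine ⟨e - 1, Nat.lt_of_succ_le ((Nat.le_div_iff_mul_le hm).2 ?_), ?_, he'.symm⟩
    · rw [Nat.succ_eq_add_one, he', mul_comm]
      omega
    · rw [he']
      omega

lemma card_intAPs : #(intAPs m n) = ∑ d ∈ range (n / m), (n - m * (d + 1)) := by
  rw [intAPs, card_biUnion]
  · simp
  · intro d _ d' _ hdd'
    simp only [Function.onFun, disjoint_left, mem_product, mem_singleton]
    rintro p ⟨-, hp⟩ ⟨-, hp'⟩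
    omega

lemma card_intAPs_mul (hm : 0 < m) :
    #(intAPs m n) * (2 * m) = (n - n % m) * (n + n % m - m) := by
  set q := n / m
  set r := n % m
  have hn : n = m * q + r := (Nat.div_add_mod n m).symm
  have hterm : ∀ d ∈ range q, n - m * (q - 1 - d + 1) = r + m * d := by
    intro d hd
    have hdq : q - 1 - d + 1 = q - d := by have := mem_range.1 hd; omega
    have hle : m * d ≤ m * q := Nat.mul_le_mul_left m (mem_range.1 hd).le
    rw [hdq, Nat.mul_sub, hn]
    omega
  rw [card_intAPs, ← sum_range_reflect, sum_congr rfl hterm, sum_add_distrib, sum_const,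
    card_range, smul_eq_mul, ← mul_sum]
  have := sum_range_id_mul_two q
  rcases q with _ | q
  · rw [show n - r = 0 by omega]
    simp
  · rw [mul_add_one] at hn
    rw [Nat.add_sub_cancel] at this
    rw [show n - r = m * q + m by omega, show n + r - m = m * q + 2 * r by omega]
    calc _ = 2 * m * (q + 1) * r + m * m * ((∑ i ∈ range (q + 1), i) * 2) := by ring
      _ = _ := by rw [this]; ring

end IntAPs

section Counting

variable {α : Type*} [CommRing α] [LinearOrder α] [DecidableEq α] {k : ℕ} {V : Finset α}
  {p p' : α × α}

noncomputable def apPairs (k : ℕ) (V : Finset α) : Finset (α × α) :=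
  (V ×ˢ V).filter fun p => p.1 < p.2 ∧ arithProg k p.1 (p.2 - p.1) ⊆ V

noncomputable def rankSeq (V : Finset α) (p : α × α) (s : ℕ) : ℕ :=
  rank V (p.1 + s * (p.2 - p.1))

lemma mem_of_mem_apPairs (hp : p ∈ apPairs k V) {s : ℕ} (hs : s < k) :
    p.1 + s * (p.2 - p.1) ∈ V :=
  (mem_filter.1 hp).2.2 (add_mul_mem_arithProg hs)

lemma rankSeq_le (hk : 0 < k) (hp : p ∈ apPairs k V) : rankSeq V p (k - 1) ≤ #V - 1 := by
  have := rank_lt_card (mem_of_mem_apPairs hp (by omega : k - 1 < k))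
  unfold rankSeq
  omega

variable [IsStrictOrderedRing α]

lemma kAPs_subset_image_apPairs (hk : 1 < k) :
    kAPs k V ⊆ (apPairs k V).image fun p => arithProg k p.1 (p.2 - p.1) := by
  intro P hP
  obtain ⟨hPV, a, d, hd, rfl⟩ := mem_filter.1 hP
  have hsub := (mem_powersetCard.1 hPV).1
  have first : a ∈ V :=
    hsub (by simpa using add_mul_mem_arithProg (a := a) (d := d) (by omega : 0 < k))
  have second : a + d ∈ V :=
    hsub (by simpa using add_mul_mem_arithProg (a := a) (d := d) hk)
  refine mem_image.2 ⟨(a, a + d), ?_, by simp⟩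
  simp [apPairs, first, second, hd, hsub]

lemma rankSeq_strictMonoOn (hp : p ∈ apPairs k V) :
    StrictMonoOn (rankSeq V p) (Set.Iic (k - 1)) := by
  intro s _ s' hs' hss'
  apply rank_lt_rank (mem_of_mem_apPairs hp (by rw [Set.mem_Iic] at hs'; omega))
  have : p.1 < p.2 := (mem_filter.1 hp).2.1
  have : (s : α) < s' := by exact_mod_cast hss'
  nlinarith

lemma card_apPairs_le (hk : 1 < k) : #(apPairs k V) ≤ #(intAPs (k - 1) #V) := by
  refine card_le_card_of_injOn (fun p => toIntAP (k - 1) (#V - 1) (rankSeq V p))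
    (fun p hp => ?_) (fun p hp p' hp' h => ?_)
  · obtain ⟨he, hbound, -⟩ :=
      toIntAP_spec (by omega) (rankSeq_strictMonoOn hp) (rankSeq_le (by omega) hp)
    have hV : 0 < #V := card_pos.2 ⟨_, mem_of_mem_apPairs hp (s := 0) (by omega)⟩
    rw [mem_coe, mem_intAPs (by omega)]
    dsimp only
    exact ⟨he, by omega⟩
  · obtain ⟨t, ht, hi, hj⟩ := exists_eq_of_toIntAP_eq (by omega)
      (rankSeq_strictMonoOn hp) (rankSeq_le (by omega) hp)
      (rankSeq_strictMonoOn hp') (rankSeq_le (by omega) hp') h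
    have e1 := rank_injOn (mem_of_mem_apPairs hp (by omega))
      (mem_of_mem_apPairs hp' (by omega)) hi
    have e2 := rank_injOn (mem_of_mem_apPairs hp (by omega))
      (mem_of_mem_apPairs hp' (by omega)) hj
    push_cast at e2
    ext
    · linear_combination (↑t + 1) * e1 - ↑t * e2
    · linear_combination ↑t * e1 + (1 - ↑t) * e2

lemma card_kAPs_le (hk : 1 < k) (V : Finset α) : #(kAPs k V) ≤ #(intAPs (k - 1) #V) :=
  (card_le_card (kAPs_subset_image_apPairs hk)).trans (card_image_le.trans (card_apPairs_le hk))

lemma card_intAPs_le_card_kAPs (hk : 1 < k) (n : ℕ) :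
    #(intAPs (k - 1) n) ≤ #(kAPs k ((range n).image fun i : ℕ => (i : α))) := by
  refine card_le_card_of_injOn (fun p => arithProg k (p.1 : α) p.2)
    (fun p hp => ?_) (fun p hp p' hp' h => ?_)
  · rw [mem_coe, mem_intAPs (by omega)] at hp
    have he : (0 : α) < p.2 := by exact_mod_cast hp.1
    refine mem_filter.2
      ⟨mem_powersetCard.2 ⟨fun y hy => ?_, card_arithProg he.ne'⟩, _, _, he, rfl⟩
    obtain ⟨i, hi, rfl⟩ := mem_arithProg.1 hy
    have : i * p.2 ≤ (k - 1) * p.2 := Nat.mul_le_mul_right _ (by omega)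
    exact mem_image.2 ⟨p.1 + i * p.2, mem_range.2 (by omega), by push_cast; ring⟩
  · rw [mem_coe, mem_intAPs (by omega)] at hp hp'
    obtain ⟨h1, h2⟩ :=
      eq_of_arithProg_eq hk (by exact_mod_cast hp.1) (by exact_mod_cast hp'.1) h
    exact Prod.ext (by exact_mod_cast h1) (by exact_mod_cast h2)

end Counting

theorem stmt_4_general (k n : ℕ) (hk : 1 < k) (r : ℕ) (hr : r = n % (k - 1)) :
    (∀ V : Finset ℝ, V.card = n →
      ((V.powersetCard k).filter
          (fun P => ∃ a d : ℝ, 0 < d ∧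
            P = (Finset.range k).image (fun i => a + (i : ℝ) * d))).card
        ≤ (n - r) * (n + r + 1 - k) / (2 * (k - 1)))
    ∧
    ((((Finset.range n).image (fun i => (i : ℝ))).powersetCard k).filter
        (fun P => ∃ a d : ℝ, 0 < d ∧
          P = (Finset.range k).image (fun i => a + (i : ℝ) * d))).card
      = (n - r) * (n + r + 1 - k) / (2 * (k - 1)) := by
  have hcount : (n - r) * (n + r + 1 - k) / (2 * (k - 1)) = #(intAPs (k - 1) n) := by
    rw [show n + r + 1 - k = n + r - (k - 1) by omega, hr, ← card_intAPs_mul (by omega),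
      Nat.mul_div_cancel _ (by omega)]
  -- The ascription `(i : ℝ)` in the statement makes Lean lift `Finset.range k` to a `Finset ℝ`
  -- through the `Finset` monad; this turns it back into an image of `range k`.
  simp only [pure_def, bind_def, sup_singleton_apply, image_image, Function.comp_def]
  rw [hcount]
  have hcard : #((range n).image fun i : ℕ => (i : ℝ)) = n := by
    rw [card_image_of_injective _ Nat.cast_injective, card_range]
  exact ⟨fun V hV => hV ▸ card_kAPs_le hk V,
    le_antisymm ((card_kAPs_le hk _).trans_eq (by rw [hcard])) (card_intAPs_le_card_kAPs hk n)⟩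

theorem stmt_4 (k n : ℕ) (hk : 1 < k) (hn : 0 < n) (r : ℕ) (hr : r = n % (k - 1)) :
    (∀ V : Finset ℝ, V.card = n →
      ((V.powersetCard k).filter
          (fun P => ∃ a d : ℝ, 0 < d ∧
            P = (Finset.range k).image (fun i => a + (i : ℝ) * d))).card
        ≤ (n - r) * (n + r + 1 - k) / (2 * (k - 1)))
    ∧
    ((((Finset.range n).image (fun i => (i : ℝ))).powersetCard k).filter
        (fun P => ∃ a d : ℝ, 0 < d ∧
          P = (Finset.range k).image (fun i => a + (i : ℝ) * d))).card
      = (n - r) * (n + r + 1 - k) / (2 * (k - 1)) :=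
  stmt_4_general k n hk r hr
end

section
/- Let n ≥ 3 be odd and let E and O be nonempty finite sets where E consists of consecutive even integers, O consists of consecutive odd integers, E and O have the same barycenter (arithmetic mean), and |E| + |O| = n with E ∩ O = ∅. Then the set V = E ∪ O contains exactly (n-1)²/4 three-term arithmetic progressions, i.e., V is optimal for 3-term arithmetic progressions. -/
/-!
Let `c` be the common barycenter of `E` and `O`. Each of `E`, `O` consists of the integers of one
parity in an interval centred at `c`, so `V = E ∪ O` is symmetric about `c`, `c ∈ V`, and
`2m - x ∈ V` whenever `x ∈ V` and `x < m ≤ c`. Count the progressions by their middle term `m`: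
for `m ≤ c` every element of `V` below `m` starts one, and reflection in `c` matches middle terms
above `c` with middle terms below `c`. If `k` elements of `V` lie below `c`, then `|V| = 2k + 1` and
the count is `2 (0 + 1 + ⋯ + (k - 1)) + k = k² = (|V| - 1)² / 4`.
-/

open Finset

lemma sum_card_filter_lt_eq_sum_range {α : Type*} [LinearOrder α] (W : Finset α) :
    ∑ m ∈ W, #{x ∈ W | x < m} = ∑ i ∈ range #W, i := by
  induction W using Finset.induction_on_max with
  | empty => simp
  | insert a s ha ih =>
    have ha' : a ∉ s := fun h => lt_irrefl a (ha a h)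
    rw [sum_insert ha', card_insert_of_notMem ha', sum_range_succ, add_comm]
    congr 1
    · rw [← ih]
      refine sum_congr rfl fun m hm => ?_
      rw [filter_insert, if_neg (ha m hm).not_gt]
    · rw [filter_insert, if_neg (lt_irrefl a), filter_true_of_mem ha]

lemma sum_eq_sum_filter_lt_add_add_sum_filter_gt {α M : Type*} [LinearOrder α] [AddCommMonoid M]
    {V : Finset α} {c : α} (hc : c ∈ V) (f : α → M) :
    ∑ x ∈ V, f x = ∑ x ∈ V with x < c, f x + f c + ∑ x ∈ V with c < x, f x := by
  have hnot : {x ∈ V | ¬ x < c} = insert c {x ∈ V | c < x} := by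
    ext x
    simp only [mem_filter, mem_insert, not_lt]
    constructor
    · rintro ⟨hx, hcx⟩
      exact hcx.eq_or_lt.imp Eq.symm fun h => ⟨hx, h⟩
    · rintro (rfl | ⟨hx, h⟩)
      exacts [⟨hc, le_rfl⟩, ⟨hx, h.le⟩]
  rw [← sum_filter_add_sum_filter_not V (· < c), hnot, sum_insert (by simp), add_assoc]

open Classical in
noncomputable def threeAPs (V : Finset ℤ) : Finset (Finset ℤ) :=
  {P ∈ V.powersetCard 3 | ∃ a d : ℤ, 0 < d ∧ P = {a, a + d, a + 2 * d}}

def midpointCount (V : Finset ℤ) (m : ℤ) : ℕ :=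
  #{x ∈ V | x < m ∧ 2 * m - x ∈ V}

open Classical in
lemma card_threeAPs_eq_sum_midpointCount (V : Finset ℤ) :
    #(threeAPs V) = ∑ m ∈ V, midpointCount V m := by
  simp only [midpointCount]
  rw [← card_sigma]
  symm
  refine card_bij (fun z _ => {z.2, z.1, 2 * z.1 - z.2}) ?_ ?_ ?_
  · rintro ⟨m, x⟩ hz
    simp only [mem_sigma, mem_filter] at hz
    obtain ⟨hm, hx, hxm, hz⟩ := hz
    refine mem_filter.2 ⟨mem_powersetCard.2 ⟨?_, ?_⟩, x, m - x, by omega, by ring_nf⟩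
    · simp [insert_subset_iff, *]
    · exact card_eq_three.2 ⟨x, m, 2 * m - x, by omega, by omega, by omega, rfl⟩
  · rintro ⟨m, x⟩ hz ⟨m', x'⟩ hz' heq
    simp only [mem_sigma, mem_filter] at hz hz'
    have hmem := fun y => Finset.ext_iff.mp heq y
    simp only [mem_insert, mem_singleton] at hmem
    have := hmem x; have := hmem m; have := hmem x'; have := hmem m'
    obtain ⟨rfl, rfl⟩ : m = m' ∧ x = x' := by omega
    rfl
  · intro P hP
    obtain ⟨hPV, a, d, hd, rfl⟩ := mem_filter.1 hP
    have hsub := (mem_powersetCard.1 hPV).1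
    simp only [insert_subset_iff, singleton_subset_iff] at hsub
    have hend : 2 * (a + d) - a = a + 2 * d := by ring
    refine ⟨⟨a + d, a⟩, ?_, by rw [hend]⟩
    simp only [mem_sigma, mem_filter]
    exact ⟨hsub.2.1, hsub.1, by omega, hend ▸ hsub.2.2⟩

section Symmetric

variable {V : Finset ℤ} {c : ℤ}

lemma midpointCount_two_mul_sub (hV : ∀ x ∈ V, 2 * c - x ∈ V) (m : ℤ) :
    midpointCount V (2 * c - m) = midpointCount V m := by
  refine card_nbij' (fun x => x - 2 * (c - m)) (fun y => y + 2 * (c - m)) ?_ ?_ ?_ ?_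
  · intro x hx
    simp only [coe_filter, Set.mem_ofPred_eq] at hx ⊢
    refine ⟨?_, by omega, ?_⟩
    · convert hV _ hx.2.2 using 1; ring
    · convert hV _ hx.1 using 1; ring
  · intro y hy
    simp only [coe_filter, Set.mem_ofPred_eq] at hy ⊢
    refine ⟨?_, by omega, ?_⟩
    · convert hV _ hy.2.2 using 1; ring
    · convert hV _ hy.1 using 1; ring
  · intro x _; simp
  · intro y _; simp

lemma sum_filter_gt_eq_sum_filter_lt {M : Type*} [AddCommMonoid M]
    (hV : ∀ x ∈ V, 2 * c - x ∈ V) (f : ℤ → M) :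
    ∑ m ∈ V with c < m, f m = ∑ m ∈ V with m < c, f (2 * c - m) := by
  refine sum_nbij' (fun x => 2 * c - x) (fun x => 2 * c - x) ?_ ?_ ?_ ?_ ?_
  all_goals intro x hx
  · simp only [mem_filter] at hx ⊢
    exact ⟨hV x hx.1, by omega⟩
  · simp only [mem_filter] at hx ⊢
    exact ⟨hV x hx.1, by omega⟩
  all_goals ring_nf

lemma card_eq_two_mul_card_filter_lt_add_one (hV : ∀ x ∈ V, 2 * c - x ∈ V) (hc : c ∈ V) :
    #V = 2 * #{x ∈ V | x < c} + 1 := by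
  rw [card_eq_sum_ones, sum_eq_sum_filter_lt_add_add_sum_filter_gt hc,
    sum_filter_gt_eq_sum_filter_lt hV, card_eq_sum_ones {x ∈ V | x < c}]
  ring

end Symmetric

structure IsReflectionClosed (V : Finset ℤ) (c : ℤ) : Prop where
  reflect_center : ∀ x ∈ V, 2 * c - x ∈ V
  reflect_of_lt_of_le : ∀ x ∈ V, ∀ m, x < m → m ≤ c → 2 * m - x ∈ V

namespace IsReflectionClosed

variable {V : Finset ℤ} {c : ℤ}

lemma union {W : Finset ℤ} (hV : IsReflectionClosed V c) (hW : IsReflectionClosed W c) :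
    IsReflectionClosed (V ∪ W) c where
  reflect_center x hx := by
    rcases mem_union.1 hx with hx | hx
    exacts [mem_union_left _ (hV.1 x hx), mem_union_right _ (hW.1 x hx)]
  reflect_of_lt_of_le x hx m hxm hmc := by
    rcases mem_union.1 hx with hx | hx
    exacts [mem_union_left _ (hV.2 x hx m hxm hmc), mem_union_right _ (hW.2 x hx m hxm hmc)]

lemma midpointCount_of_le (hV : IsReflectionClosed V c) {m : ℤ} (hm : m ≤ c) :
    midpointCount V m = #{x ∈ V | x < m} :=
  congrArg card <| filter_congr fun x hx => and_iff_left_of_imp fun hxm =>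
    hV.2 x hx m hxm hm

lemma card_threeAPs (hV : IsReflectionClosed V c) (hc : c ∈ V) :
    #(threeAPs V) = #{x ∈ V | x < c} ^ 2 := by
  set L := {x ∈ V | x < c}
  have hlower : ∑ m ∈ L, midpointCount V m = ∑ i ∈ range #L, i := by
    rw [← sum_card_filter_lt_eq_sum_range]
    refine sum_congr rfl fun m hm => ?_
    have hmc := (mem_filter.1 hm).2
    rw [hV.midpointCount_of_le hmc.le, filter_filter]
    exact congrArg card <| filter_congr fun x _ => (and_iff_right_of_imp (·.trans hmc)).symm
  rw [card_threeAPs_eq_sum_midpointCount, sum_eq_sum_filter_lt_add_add_sum_filter_gt hc,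
    sum_filter_gt_eq_sum_filter_lt hV.1,
    sum_congr rfl fun m _ => midpointCount_two_mul_sub hV.1 m, hV.midpointCount_of_le le_rfl,
    hlower]
  induction #L with
  | zero => rfl
  | succ k ih => rw [sum_range_succ]; linear_combination ih

end IsReflectionClosed

def stepTwoProgression (a : ℤ) (m : ℕ) : Finset ℤ :=
  (range m).image fun i : ℕ => a + 2 * (i : ℤ)

section StepTwoProgression

variable {a x : ℤ} {m : ℕ}

lemma mem_stepTwoProgression :
    x ∈ stepTwoProgression a m ↔ a ≤ x ∧ x < a + 2 * m ∧ 2 ∣ x - a := by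
  simp only [stepTwoProgression, mem_image, mem_range]
  constructor
  · rintro ⟨i, hi, rfl⟩
    omega
  · intro hx
    exact ⟨((x - a) / 2).toNat, by omega, by omega⟩

lemma add_two_mul_injective (a : ℤ) : Function.Injective fun i : ℕ => a + 2 * (i : ℤ) :=
  fun i j h => by simp only at h; omega

lemma card_stepTwoProgression (a : ℤ) (m : ℕ) : #(stepTwoProgression a m) = m := by
  rw [stepTwoProgression, card_image_of_injective _ (add_two_mul_injective a), card_range]

lemma sum_stepTwoProgression (a : ℤ) (m : ℕ) :
    ∑ x ∈ stepTwoProgression a m, x = m * (a + m - 1) := by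
  rw [stepTwoProgression, sum_image fun i _ j _ h => add_two_mul_injective a h]
  induction m with
  | zero => simp
  | succ k ih => rw [sum_range_succ, ih]; push_cast; ring

lemma isReflectionClosed_stepTwoProgression (a : ℤ) (m : ℕ) :
    IsReflectionClosed (stepTwoProgression a m) (a + m - 1) where
  reflect_center x hx := by
    rw [mem_stepTwoProgression] at hx ⊢
    omega
  reflect_of_lt_of_le x hx m' _ _ := by
    rw [mem_stepTwoProgression] at hx ⊢
    omega

end StepTwoProgression

attribute [local instance] Classical.propDecidable

-- Written this way, `range m` is first pushed into `Finset ℤ` through the `Finset` monad.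
lemma image_range_eq_stepTwoProgression (a : ℤ) (m : ℕ) :
    (Finset.range m).image (fun i => a + 2 * (i : ℤ)) = stepTwoProgression a m := by
  ext
  simp [stepTwoProgression]

theorem stmt_5_general (n : ℕ)
    (E O : Finset ℤ)
    (hE : ∃ (a : ℤ) (m : ℕ), Even a ∧ 0 < m ∧
      E = (Finset.range m).image (fun i => a + 2 * (i : ℤ)))
    (hO : ∃ (a : ℤ) (m : ℕ), Odd a ∧ 0 < m ∧
      O = (Finset.range m).image (fun i => a + 2 * (i : ℤ)))
    (hdisj : Disjoint E O)
    (hcard : E.card + O.card = n)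
    (hbary : (∑ x ∈ E, x) * O.card = (∑ x ∈ O, x) * E.card) :
    (((E ∪ O).powersetCard 3).filter
        (fun P => ∃ a d : ℤ, 0 < d ∧ P = {a, a + d, a + 2 * d})).card
      = (n - 1) ^ 2 / 4 := by
  obtain ⟨a, p, ha, hp, hE⟩ := hE
  obtain ⟨b, q, hb, hq, hO⟩ := hO
  rw [image_range_eq_stepTwoProgression] at hE hO
  have hcenter : a + p - 1 = b + q - 1 := by
    rw [hE, hO, card_stepTwoProgression, card_stepTwoProgression, sum_stepTwoProgression,
      sum_stepTwoProgression] at hbary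
    have hpq : (p * q : ℤ) ≠ 0 := by positivity
    exact mul_right_cancel₀ hpq (by linear_combination hbary)
  have hV : IsReflectionClosed (E ∪ O) (a + p - 1) := hE ▸ hO ▸
    (isReflectionClosed_stepTwoProgression a p).union
      (hcenter ▸ isReflectionClosed_stepTwoProgression b q)
  -- `a + p - 1` has the parity of `a` when `p` is odd, and of `b` (and `q` is odd) otherwise.
  have hc : a + p - 1 ∈ E ∪ O := by
    rw [hE, hO, mem_union, mem_stepTwoProgression, mem_stepTwoProgression]
    have := ha.two_dvd
    have := Int.odd_iff.1 hb
    omega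
  have hn : n = 2 * #{x ∈ E ∪ O | x < a + p - 1} + 1 := by
    rw [← hcard, ← card_union_of_disjoint hdisj, card_eq_two_mul_card_filter_lt_add_one hV.1 hc]
  change #(threeAPs _) = _
  rw [hV.card_threeAPs hc, hn, Nat.add_sub_cancel, mul_pow]
  norm_num

theorem stmt_5 (n : ℕ) (hn : 3 ≤ n) (hodd : Odd n)
    (E O : Finset ℤ)
    (hE : ∃ (a : ℤ) (m : ℕ), Even a ∧ 0 < m ∧
      E = (Finset.range m).image (fun i => a + 2 * (i : ℤ)))
    (hO : ∃ (a : ℤ) (m : ℕ), Odd a ∧ 0 < m ∧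
      O = (Finset.range m).image (fun i => a + 2 * (i : ℤ)))
    (hdisj : Disjoint E O)
    (hcard : E.card + O.card = n)
    (hbary : (∑ x ∈ E, x) * O.card = (∑ x ∈ O, x) * E.card) :
    (((E ∪ O).powersetCard 3).filter
        (fun P => ∃ a d : ℤ, 0 < d ∧ P = {a, a + d, a + 2 * d})).card
      = (n - 1) ^ 2 / 4 :=
  stmt_5_general n E O hE hO hdisj hcard hbary
end

section
/- Let n ≥ k ≥ 4 with r the remainder of n divided by k-1 satisfying 0 < r < k-1. Then the set V = {0, 2, 3, …, n} (of size n) contains strictly fewer than (n-r)(n+r-k+1)/(2(k-1)) k-term arithmetic progressions; i.e., removing the second point of an (n+1)-term progression is not optimal when (k-1) does not divide n. -/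
/-! A `k`-term progression `{a, a + d, …, a + (k - 1) d}` in `V = {0, 2, 3, …, n}` is determined by
its start `a ≠ 1` and step `d ≥ 1` with `a + (k - 1) d ≤ n`, and `(a, d) = (0, 1)` is excluded.
Writing `m = k - 1` and `n = m q + r`, the pairs with `a ≠ 1` number `∑_{d=1}^{q} (n - m d)`
(each step `d ≤ q` has `m d < n` because `r > 0`, so the start `1` really is lost), and this sum
is exactly `(n - r)(n + r - m) / (2m)`. Losing `(0, 1)` as well makes the count strictly smaller. -/

attribute [local instance] Classical.propDecidable

open Finset

theorem card_filter_arithProg_le {V : Finset ℕ} {k : ℕ} {s : Finset (ℕ × ℕ)}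
    (hs : ∀ a d, 0 < d → (∀ i < k, a + i * d ∈ V) → (a, d) ∈ s) :
    ((V.powersetCard k).filter
        (fun P => ∃ a d : ℕ, 0 < d ∧ P = (range k).image (fun i => a + i * d))).card
      ≤ s.card := by
  refine card_le_card_of_surjOn (fun p : ℕ × ℕ => (range k).image fun i => p.1 + i * p.2) ?_
  rintro P hP
  simp only [coe_filter, mem_powersetCard, Set.mem_ofPred_eq] at hP
  obtain ⟨⟨hPV, -⟩, a, d, hd, rfl⟩ := hP
  exact ⟨(a, d), hs a d hd fun i hi => hPV (mem_image_of_mem _ (mem_range.2 hi)), rfl⟩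

theorem two_mul_sum_Icc_sub_mul_add {m n q : ℕ} (hq : m * q ≤ n) :
    2 * ∑ d ∈ Icc 1 q, (n - m * d) + m * (q * (q + 1)) = 2 * q * n := by
  induction q with
  | zero => simp
  | succ q ih =>
    rw [sum_Icc_succ_top (by omega)]
    have := ih (by nlinarith)
    zify [hq] at this ⊢
    linear_combination this

theorem two_mul_mul_sum_Icc_div_sub_mul (n m : ℕ) :
    2 * m * ∑ d ∈ Icc 1 (n / m), (n - m * d) = (n - n % m) * (n + n % m - m) := by
  set q := n / m
  set r := n % m
  have hn : m * q + r = n := Nat.div_add_mod n m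
  obtain hq | hq := Nat.eq_zero_or_pos q
  · rw [hq, mul_zero, zero_add] at hn
    simp [hq, hn]
  have key := two_mul_sum_Icc_sub_mul_add (show m * q ≤ n by omega)
  have hm : m ≤ n := by nlinarith
  rw [show n - r = m * q by omega]
  zify [hm, show m ≤ n + r by omega] at key ⊢
  push_cast [← hn] at key ⊢
  linear_combination (m : ℤ) * key

def startStepPairs (n m : ℕ) : Finset (ℕ × ℕ) :=
  (Icc 1 (n / m)).biUnion fun d => ((range (n + 1 - m * d)).erase 1).image (·, d)

theorem mem_startStepPairs {n m a d : ℕ} (hm : 0 < m) :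
    (a, d) ∈ startStepPairs n m ↔ 0 < d ∧ a ≠ 1 ∧ a + m * d ≤ n := by
  simp only [startStepPairs, mem_biUnion, mem_Icc, mem_image, mem_erase, mem_range,
    Prod.mk.injEq]
  constructor
  · rintro ⟨d, ⟨hd, -⟩, a, ⟨ha, han⟩, rfl, rfl⟩
    omega
  · rintro ⟨hd, ha, han⟩
    have hdq : d ≤ n / m := (Nat.le_div_iff_mul_le hm).2 (by linarith [mul_comm m d])
    exact ⟨d, ⟨hd, hdq⟩, a, ⟨ha, by omega⟩, rfl, rfl⟩

theorem card_startStepPairs {n m : ℕ} (hr : 0 < n % m) :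
    (startStepPairs n m).card = ∑ d ∈ Icc 1 (n / m), (n - m * d) := by
  rw [startStepPairs, card_biUnion]
  · refine sum_congr rfl fun d hd => ?_
    rw [card_image_of_injective _ fun x y h => (Prod.mk.inj h).1, card_erase_of_mem]
    · rw [card_range]; omega
    · have hmd : m * d ≤ m * (n / m) := Nat.mul_le_mul_left m (mem_Icc.1 hd).2
      have := Nat.div_add_mod n m
      exact mem_range.2 (by omega)
  · intro d₁ _ d₂ _ hne
    simp only [disjoint_left, mem_image]
    rintro _ ⟨a, -, rfl⟩ ⟨b, -, h⟩
    exact hne (Prod.mk.inj h).2.symm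

theorem mem_erase_startStepPairs_of_arithProg {n m a d : ℕ} (hm : 0 < m) (hd : 0 < d)
    (hAP : ∀ i < m + 1, a + i * d ∈ insert 0 (Icc 2 n)) :
    (a, d) ∈ (startStepPairs n m).erase (0, 1) := by
  have h0 := hAP 0 (by omega)
  have h1 := hAP 1 (by omega)
  have hlast := hAP m (by omega)
  simp only [mem_insert, mem_Icc] at h0 h1 hlast
  rw [mem_erase, mem_startStepPairs hm, Ne, Prod.mk.injEq]
  refine ⟨by omega, hd, by omega, ?_⟩
  rcases hlast with h | h <;> nlinarith

theorem stmt_8 (n k : ℕ) (hk : 4 ≤ k) (hkn : k ≤ n)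
    (r : ℕ) (hr : r = n % (k - 1)) (hrpos : 0 < r)
    (V : Finset ℕ) (hVdef : V = insert 0 (Finset.Icc 2 n)) :
    ((V.powersetCard k).filter
        (fun P => ∃ a d : ℕ, 0 < d ∧
          P = (Finset.range k).image (fun i => a + i * d))).card
      < (n - r) * (n + r + 1 - k) / (2 * (k - 1)) := by
  obtain ⟨m, rfl⟩ : ∃ m, k = m + 1 := ⟨k - 1, by omega⟩
  subst hr hVdef
  simp only [add_tsub_cancel_right] at hrpos ⊢
  have hm : 0 < m := by omega
  have h01 : (0, 1) ∈ startStepPairs n m :=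
    (mem_startStepPairs hm).2 ⟨one_pos, zero_ne_one, by omega⟩
  calc _ ≤ ((startStepPairs n m).erase (0, 1)).card :=
        card_filter_arithProg_le fun _ _ hd => mem_erase_startStepPairs_of_arithProg hm hd
    _ < (startStepPairs n m).card := card_erase_lt_of_mem h01
    _ = _ := by
      rw [show n + n % m + 1 - (m + 1) = n + n % m - m by omega,
        ← two_mul_mul_sum_Icc_div_sub_mul, card_startStepPairs hrpos,
        Nat.mul_div_cancel_left _ (by omega)]
end

section
/- Let n ≥ k ≥ 4 and let V = {0, 2, 3, …, n-2, n-1, n+1} (an arithmetic progression of consecutive integers with both the second and second-to-last points removed, so |V| = n). Then V contains strictly fewer k-term arithmetic progressions than the maximum (n-r)(n+r-k+1)/(2(k-1)), where r is the remainder of n divided by k-1. -/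
/-!
A `k`-term progression with common difference `d` inside an `n`-term interval has `n - (k - 1) d`
possible starting points, and summing over `d` gives the maximum `(n - r)(n + r + 1 - k) / (2(k - 1))`.
In `V = {0, 2, 3, …, n - 1, n + 1}` the progressions of difference `1` must lie in the run
`2, …, n - 1`, so this difference loses two of its `n - (k - 1)` progressions. A difference `d ≥ 2`
gains at most one progression over the interval count, and only when `(k - 1) d = n ± 1`; since
`k - 1 ≥ 3`, at most one `d` does so.
-/

attribute [local instance] Classical.propDecidable

open Finset

def ap (k a d : ℕ) : Finset ℕ := (range k).image (fun i => a + i * d)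

noncomputable def arithProgs (S : Finset ℕ) (k : ℕ) : Finset (Finset ℕ) :=
  (S.powersetCard k).filter (fun P => ∃ a d : ℕ, 0 < d ∧ P = ap k a d)

def apStarts (S : Finset ℕ) (k d : ℕ) : Finset ℕ :=
  S.filter (fun a => ∀ i < k, a + i * d ∈ S)

lemma mem_ap {k a d x : ℕ} : x ∈ ap k a d ↔ ∃ i < k, a + i * d = x := by
  simp [ap]

lemma le_of_mem_ap {k a d x : ℕ} (hx : x ∈ ap k a d) : a ≤ x := by
  obtain ⟨i, -, rfl⟩ := mem_ap.1 hx
  omega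

lemma card_ap {k d : ℕ} (a : ℕ) (hd : 0 < d) : (ap k a d).card = k := by
  rw [ap, card_image_of_injective _ fun i j h => Nat.eq_of_mul_eq_mul_right hd (by simpa using h),
    card_range]

lemma ap_subset_iff {S : Finset ℕ} {k a d : ℕ} : ap k a d ⊆ S ↔ ∀ i < k, a + i * d ∈ S := by
  simp only [ap, image_subset_iff, mem_range]

lemma self_mem_ap {k : ℕ} (a d : ℕ) (hk : 0 < k) : a ∈ ap k a d :=
  mem_ap.2 ⟨0, hk, by ring⟩

lemma add_mem_ap {k : ℕ} (a d : ℕ) (hk : 1 < k) : a + d ∈ ap k a d :=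
  mem_ap.2 ⟨1, hk, by ring⟩

lemma ap_inj {k a a' d d' : ℕ} (hk : 2 ≤ k) (hd : 0 < d) (hd' : 0 < d')
    (h : ap k a d = ap k a' d') : a = a' ∧ d = d' := by
  obtain rfl : a = a' := le_antisymm (le_of_mem_ap (h.symm ▸ self_mem_ap a' d' (by omega)))
    (le_of_mem_ap (h ▸ self_mem_ap a d (by omega)))
  -- the second term `a + e` of one progression is a later term `a + j * e'` of the other
  have step : ∀ {e e'}, 0 < e → ap k a e = ap k a e' → e' ≤ e := by
    intro e e' he h
    obtain ⟨j, -, hj⟩ := mem_ap.1 (h ▸ add_mem_ap a e (by omega))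
    rcases j with _ | j
    · omega
    · nlinarith
  exact ⟨rfl, le_antisymm (step hd' h.symm) (step hd h)⟩

lemma mem_apStarts {S : Finset ℕ} {k d a : ℕ} (hk : 0 < k) :
    a ∈ apStarts S k d ↔ ∀ i < k, a + i * d ∈ S := by
  simp only [apStarts, mem_filter, and_iff_right_iff_imp]
  exact fun h => by simpa using h 0 hk

lemma card_arithProgs_eq_sum {S : Finset ℕ} {k N : ℕ} (hk : 2 ≤ k) (hS : ∀ x ∈ S, x ≤ N) :
    (arithProgs S k).card = ∑ d ∈ range N, (apStarts S k (d + 1)).card := by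
  rw [← card_sigma]
  symm
  refine card_bij (fun p _ => ap k p.2 (p.1 + 1)) ?_ ?_ ?_
  · rintro ⟨d, a⟩ hp
    rw [mem_sigma, mem_apStarts (by omega)] at hp
    exact mem_filter.2 ⟨mem_powersetCard.2 ⟨ap_subset_iff.2 hp.2, card_ap a d.succ_pos⟩,
      a, d + 1, d.succ_pos, rfl⟩
  · rintro ⟨d, a⟩ - ⟨d', a'⟩ - h
    obtain ⟨rfl, hdd⟩ := ap_inj hk d.succ_pos d'.succ_pos h
    obtain rfl : d = d' := by omega
    rfl
  · intro P hP
    obtain ⟨hPS, a, d, hd, rfl⟩ := mem_filter.1 hP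
    have hsub := ap_subset_iff.1 (mem_powersetCard.1 hPS).1
    have hlast := hS _ (hsub 1 (by omega))
    refine ⟨⟨d - 1, a⟩, ?_, by simp only [Nat.sub_add_cancel hd]⟩
    rw [mem_sigma, mem_range, mem_apStarts (by omega), Nat.sub_add_cancel hd]
    exact ⟨by dsimp only; omega, hsub⟩

lemma two_mul_sum_range_sub_add {m q r N : ℕ} (hr : r < m) (hN : q ≤ N) :
    2 * ∑ d ∈ range N, (m * q + r - m * (d + 1)) + m * q = q * (m * q + 2 * r) := by
  induction q generalizing N with
  | zero =>
    have hzero : ∀ d, r - m * (d + 1) = 0 := fun d => Nat.sub_eq_zero_of_le (by nlinarith)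
    simp [hzero]
  | succ q ih =>
    obtain ⟨N, rfl⟩ : ∃ N', N = N' + 1 := ⟨N - 1, by omega⟩
    have := ih (N := N) (by omega)
    rw [sum_range_succ']
    have hshift : ∀ d ∈ range N, m * (q + 1) + r - m * (d + 1 + 1) = m * q + r - m * (d + 1) :=
      fun d _ => by rw [show m * (d + 1 + 1) = m * (d + 1) + m by ring, mul_add_one]; omega
    rw [sum_congr rfl hshift]
    simp only [zero_add, mul_one] at this ⊢
    rw [mul_add_one m q] at *
    ring_nf at this ⊢
    omega

lemma sum_range_sub_mul_eq {m n N : ℕ} (hm : 0 < m) (hN : n / m ≤ N) :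
    ∑ d ∈ range N, (n - m * (d + 1)) = (n - n % m) * (n + n % m - m) / (2 * m) := by
  have key := two_mul_sum_range_sub_add (Nat.mod_lt n hm) hN
  rw [Nat.div_add_mod] at key
  symm
  apply Nat.div_eq_of_eq_mul_left (by omega)
  have hn := Nat.div_add_mod n m
  generalize n / m = q at key hn
  generalize n % m = r at key hn ⊢
  subst hn
  rcases q with _ | q
  · simp_all
  · rw [show m * (q + 1) + r - r = m * (q + 1) by omega,
      show m * (q + 1) + r + r - m = m * q + 2 * r by rw [mul_add_one]; omega]
    nlinarith

def gappedInterval (n : ℕ) : Finset ℕ := insert 0 (insert (n + 1) (Icc 2 (n - 1)))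

lemma mem_gappedInterval {n x : ℕ} :
    x ∈ gappedInterval n ↔ x = 0 ∨ x = n + 1 ∨ 2 ≤ x ∧ x ≤ n - 1 := by
  simp [gappedInterval]

lemma card_apStarts_gappedInterval_one_le {n m : ℕ} (hn : 0 < n) (hm : 1 ≤ m) :
    (apStarts (gappedInterval n) (m + 1) 1).card ≤ n - m - 2 := by
  have hsub : apStarts (gappedInterval n) (m + 1) 1 ⊆ Icc 2 (n - 1 - m) := by
    intro a ha
    have h := (mem_apStarts (by omega)).1 ha
    have h0 := h 0 (by omega)
    have h1 := h 1 (by omega)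
    have hpen := h (m - 1) (by omega)
    have hlast := h m (by omega)
    simp only [mem_gappedInterval, mem_Icc, mul_one] at h0 h1 hpen hlast ⊢
    omega
  have := card_le_card hsub
  simp only [Nat.card_Icc] at this
  omega

lemma card_apStarts_gappedInterval_le {n : ℕ} (m d : ℕ) (hn : 0 < n) :
    (apStarts (gappedInterval n) (m + 1) d).card
      ≤ n - m * d + if m * d + 1 = n ∨ m * d = n + 1 then 1 else 0 := by
  have ends : ∀ a ∈ apStarts (gappedInterval n) (m + 1) d,
      a ∈ gappedInterval n ∧ a + m * d ∈ gappedInterval n := fun a ha => by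
    have h := (mem_apStarts (by omega)).1 ha
    exact ⟨by simpa using h 0 (by omega), by simpa [mul_comm] using h m (by omega)⟩
  by_cases hle : m * d + 1 ≤ n
  · have hsub : apStarts (gappedInterval n) (m + 1) d
        ⊆ insert 0 (insert (n + 1 - m * d) (Icc 2 (n - 1 - m * d))) := fun a ha => by
      have := ends a ha
      simp only [mem_gappedInterval, mem_insert, mem_Icc] at this ⊢
      omega
    have h0 := card_insert_le 0 (insert (n + 1 - m * d) (Icc 2 (n - 1 - m * d)))
    have h1 := card_insert_le (n + 1 - m * d) (Icc 2 (n - 1 - m * d))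
    have := card_le_card hsub
    simp only [Nat.card_Icc] at h1
    split_ifs <;> omega
  · have hsub : apStarts (gappedInterval n) (m + 1) d ⊆ (range 1).filter fun _ => m * d = n + 1 :=
      fun a ha => by
        have := ends a ha
        simp only [mem_gappedInterval] at this
        simp only [mem_filter, mem_range]
        omega
    have := card_le_card hsub
    rw [card_filter, sum_range_one] at this
    split_ifs at this ⊢ <;> omega

lemma card_filter_mul_eq_pred_or_succ_le_one {m n : ℕ} (hm : 3 ≤ m) (s : Finset ℕ)
    {f : ℕ → ℕ} (hf : f.Injective) :
    (s.filter fun d => m * f d + 1 = n ∨ m * f d = n + 1).card ≤ 1 := by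
  refine card_le_one.2 fun d hd d' hd' => hf ?_
  simp only [mem_filter] at hd hd'
  -- distinct multiples of `m ≥ 3` cannot both lie in `{n - 1, n + 1}`
  rcases lt_trichotomy (f d) (f d') with h | h | h
  · have := Nat.mul_le_mul_left m (Nat.succ_le_of_lt h); rw [Nat.mul_succ] at this; omega
  · exact h
  · have := Nat.mul_le_mul_left m (Nat.succ_le_of_lt h); rw [Nat.mul_succ] at this; omega

theorem stmt_9 (n k : ℕ) (hk : 4 ≤ k) (hkn : k ≤ n)
    (r : ℕ) (hr : r = n % (k - 1))
    (V : Finset ℕ) (hVdef : V = insert 0 (insert (n + 1) (Finset.Icc 2 (n - 1)))) :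
    ((V.powersetCard k).filter
        (fun P => ∃ a d : ℕ, 0 < d ∧
          P = (Finset.range k).image (fun i => a + i * d))).card
      < (n - r) * (n + r + 1 - k) / (2 * (k - 1)) := by
  obtain ⟨m, rfl⟩ : ∃ m, k = m + 1 := ⟨k - 1, by omega⟩
  simp only [Nat.add_sub_cancel] at hr ⊢
  subst hr hVdef
  change (arithProgs (gappedInterval n) (m + 1)).card < _
  have hV : ∀ x ∈ gappedInterval n, x ≤ n + 1 := fun x hx => by
    rw [mem_gappedInterval] at hx
    omega
  rw [card_arithProgs_eq_sum (by omega) hV, Nat.add_sub_add_right,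
    ← sum_range_sub_mul_eq (N := n + 1) (by omega) ((Nat.div_le_self n m).trans n.le_succ),
    sum_range_succ', sum_range_succ']
  set E := (range n).filter fun d => m * (d + 1 + 1) + 1 = n ∨ m * (d + 1 + 1) = n + 1
  have hone := card_apStarts_gappedInterval_one_le (n := n) (by omega) (by omega : 1 ≤ m)
  have hrest : ∑ d ∈ range n, (apStarts (gappedInterval n) (m + 1) (d + 1 + 1)).card
      ≤ ∑ d ∈ range n, (n - m * (d + 1 + 1)) + E.card := by
    rw [card_filter, ← sum_add_distrib]
    exact sum_le_sum fun d _ => card_apStarts_gappedInterval_le m (d + 1 + 1) (by omega)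
  have hE : E.card ≤ 1 :=
    card_filter_mul_eq_pred_or_succ_le_one (by omega) _ fun _ _ h => by simpa using h
  -- an excess needs `2 m ≤ n + 1`, so then the loss of two at difference `1` is not truncated
  have hE' : E.card = 0 ∨ m + 2 ≤ n := by
    rcases E.eq_empty_or_nonempty with h | ⟨d, hd⟩
    · simp [h]
    · have := Nat.mul_le_mul_left m (show 2 ≤ d + 1 + 1 by omega)
      simp only [E, mem_filter] at hd
      omega
  simp only [zero_add, mul_one]
  omega
end

section
/- Let ζ₆ = e^{iπ/3} and let ≺ denote the lexicographic order on ℂ (y ≺ z iff Re(y) < Re(z), or Re(y) = Re(z) and Im(y) < Im(z)). For distinct u, v ∈ ℂ, the point w = ζ₆u + conj(ζ₆)v satisfies u ≺ w and v ≺ w if and only if Arg(v-u) ∈ (π/6, 5π/6]. -/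
open Complex

/-- Lexicographic order on ℂ. -/
def CLexLt (y z : ℂ) : Prop := y.re < z.re ∨ (y.re = z.re ∧ y.im < z.im)

/-!
Put `z = v - u`. Since `ζ₆ + conj ζ₆ = 1`, we get `w - u = conj ζ₆ * z` and `w - v = -(ζ₆ * z)`,
i.e. `z` rotated by `-π/3` and by `2π/3`. As the order is translation invariant, `u ≺ w ∧ v ≺ w`
says that both rotated vectors are lexicographically positive, which works out to the linear
conditions `-√3 z.im ≤ z.re < √3 z.im`. Writing `z = ‖z‖ e^{iθ}`, these read
`sin (θ + π/6) ≥ 0` and `sin (θ - π/6) > 0`, which for `θ ∈ (-π, π]` means `θ ∈ (π/6, 5π/6]`.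
-/

open Real ComplexConjugate

lemma cLexLt_iff_zero_cLexLt_sub (y z : ℂ) : CLexLt y z ↔ CLexLt 0 (z - y) := by
  simp only [CLexLt, zero_re, zero_im, sub_re, sub_im, sub_pos, eq_comm (a := (0 : ℝ)), sub_eq_zero,
    eq_comm (a := z.re)]

lemma sin_sub_pi_div_six_pos_and_sin_add_pi_div_six_nonneg_iff {θ : ℝ} (hθ : θ ∈ Set.Ioc (-π) π) :
    0 < Real.sin (θ - π / 6) ∧ 0 ≤ Real.sin (θ + π / 6) ↔ θ ∈ Set.Ioc (π / 6) (5 * π / 6) := by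
  obtain ⟨hθl, hθr⟩ := hθ
  have hπ := pi_pos
  constructor
  · rintro ⟨hsub, hadd⟩
    by_contra hθ
    rcases not_and_or.mp hθ with hle | hlt
    · rcases le_or_gt (-π) (θ - π / 6) with h | h
      · linarith [sin_nonpos_of_nonpos_of_neg_pi_le (x := θ - π / 6) (by linarith) h]
      · linarith [sin_neg_of_neg_of_neg_pi_lt (x := θ + π / 6) (by linarith) (by linarith)]
    · have : 0 < Real.sin (θ + π / 6 - π) := sin_pos_of_pos_of_lt_pi (by linarith) (by linarith)
      linarith [Real.sin_sub_pi (θ + π / 6)]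
  · rintro ⟨hl, hr⟩
    exact ⟨sin_pos_of_pos_of_lt_pi (by linarith) (by linarith),
      sin_nonneg_of_nonneg_of_le_pi (by linarith) (by linarith)⟩

lemma arg_mem_Ioc_pi_div_six_iff (z : ℂ) :
    arg z ∈ Set.Ioc (π / 6) (5 * π / 6) ↔ -(√3 * z.im) ≤ z.re ∧ z.re < √3 * z.im := by
  rcases eq_or_ne z 0 with rfl | hz
  · simp only [arg_zero, zero_re, zero_im, mul_zero, neg_zero, lt_irrefl, and_false, iff_false]
    exact fun h => by linarith [h.1, pi_pos]
  have h2r : 0 < 2 * ‖z‖ := by positivity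
  have hsub : √3 * z.im - z.re = 2 * ‖z‖ * Real.sin (arg z - π / 6) := by
    rw [Real.sin_sub, cos_pi_div_six, sin_pi_div_six, ← norm_mul_cos_arg, ← norm_mul_sin_arg]; ring
  have hadd : √3 * z.im + z.re = 2 * ‖z‖ * Real.sin (arg z + π / 6) := by
    rw [Real.sin_add, cos_pi_div_six, sin_pi_div_six, ← norm_mul_cos_arg, ← norm_mul_sin_arg]; ring
  rw [← sin_sub_pi_div_six_pos_and_sin_add_pi_div_six_nonneg_iff ⟨neg_pi_lt_arg z, arg_le_pi z⟩,
    and_comm, ← mul_pos_iff_of_pos_left h2r, ← mul_nonneg_iff_of_pos_left h2r, ← hsub, ← hadd]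
  exact and_congr ⟨fun h => by linarith, fun h => by linarith⟩ ⟨fun h => by linarith, fun h => by linarith⟩

local notation "ζ₆" => exp (π * I / 3)

lemma pi_mul_I_div_three_eq : (π * I / 3 : ℂ) = ((π / 3 : ℝ) : ℂ) * I := by
  push_cast; ring

lemma exp_pi_mul_I_div_three_re : (ζ₆).re = 1 / 2 := by
  rw [pi_mul_I_div_three_eq, exp_ofReal_mul_I_re, cos_pi_div_three]

lemma exp_pi_mul_I_div_three_im : (ζ₆).im = √3 / 2 := by
  rw [pi_mul_I_div_three_eq, exp_ofReal_mul_I_im, sin_pi_div_three]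

lemma exp_pi_mul_I_div_three_add_conj : ζ₆ + conj ζ₆ = 1 := by
  rw [add_conj, exp_pi_mul_I_div_three_re]
  norm_num

lemma mul_add_conj_mul_sub_left {ζ : ℂ} (hζ : ζ + conj ζ = 1) (u v : ℂ) :
    ζ * u + conj ζ * v - u = conj ζ * (v - u) := by
  linear_combination u * hζ

lemma mul_add_conj_mul_sub_right {ζ : ℂ} (hζ : ζ + conj ζ = 1) (u v : ℂ) :
    ζ * u + conj ζ * v - v = -(ζ * (v - u)) := by
  linear_combination v * hζ

lemma zero_cLexLt_conj_mul_and_neg_mul_iff (z : ℂ) :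
    CLexLt 0 (conj ζ₆ * z) ∧ CLexLt 0 (-(ζ₆ * z)) ↔ -(√3 * z.im) ≤ z.re ∧ z.re < √3 * z.im := by
  have hsqrt : √3 * √3 = 3 := Real.mul_self_sqrt (by norm_num)
  have hsqrt_pos : 0 < √3 := by positivity
  simp only [CLexLt, mul_re, mul_im, conj_re, conj_im, neg_re, neg_im, zero_re, zero_im,
    exp_pi_mul_I_div_three_re, exp_pi_mul_I_div_three_im]
  constructor
  · rintro ⟨h₁ | ⟨h₁, h₁'⟩, h₂ | ⟨h₂, h₂'⟩⟩
    · exact ⟨by linarith, by linarith⟩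
    · nlinarith
    · exact ⟨by linarith, by linarith⟩
    · nlinarith
  · rintro ⟨hle, hlt⟩
    refine ⟨?_, Or.inl (by linarith)⟩
    rcases hle.lt_or_eq with hlt' | heq
    · exact Or.inl (by linarith)
    · have hb : 0 < z.im := by nlinarith
      exact Or.inr ⟨by linarith, by nlinarith⟩

theorem stmt_11_general (u v : ℂ)
    (ζ : ℂ) (hζ : ζ = Complex.exp (Real.pi * Complex.I / 3))
    (w : ℂ) (hw : w = ζ * u + (starRingEnd ℂ) ζ * v) :
    (CLexLt u w ∧ CLexLt v w) ↔
      Complex.arg (v - u) ∈ Set.Ioc (Real.pi / 6) (5 * Real.pi / 6) := by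
  subst hζ hw
  rw [cLexLt_iff_zero_cLexLt_sub u, cLexLt_iff_zero_cLexLt_sub v,
    mul_add_conj_mul_sub_left exp_pi_mul_I_div_three_add_conj,
    mul_add_conj_mul_sub_right exp_pi_mul_I_div_three_add_conj,
    zero_cLexLt_conj_mul_and_neg_mul_iff, arg_mem_Ioc_pi_div_six_iff]

theorem stmt_11 (u v : ℂ) (huv : u ≠ v)
    (ζ : ℂ) (hζ : ζ = Complex.exp (Real.pi * Complex.I / 3))
    (w : ℂ) (hw : w = ζ * u + (starRingEnd ℂ) ζ * v) :
    (CLexLt u w ∧ CLexLt v w) ↔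
      Complex.arg (v - u) ∈ Set.Ioc (Real.pi / 6) (5 * Real.pi / 6) :=
  stmt_11_general u v ζ hζ w hw
end

section
/- Let u, v be distinct points of ℂ with lexicographic order ≺. If Arg(v-u) ∉ (-5π/6, -π/6] ∪ (π/6, 5π/6], then neither of the two equilateral triangles with vertices u and v has u and v as its two ≺-smallest vertices, nor as its two ≺-largest vertices. -/
/-!
Write `d = v - u`. Since `ζ + conj ζ = 1`, the apexes satisfy `w - u = conj ζ * d`, `w - v = -ζ * d`,
`w' - u = ζ * d` and `w' - v = -conj ζ * d`, and `-ζ = conj ζ ^ 2`. So `u, v ≺ w` says that `d` rotated by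
`-π/3` and by `-2π/3` are both lexicographically positive, i.e. have argument in `(-π/2, π/2]`, which
happens exactly when `Arg d ∈ (π/6, 5π/6]`; the other three cases are the same up to conjugating the
rotation or negating `d`.
-/

open Complex

open ComplexConjugate

theorem clexLt_iff_zero_clexLt_sub {y z : ℂ} : CLexLt y z ↔ CLexLt 0 (z - y) := by
  simp only [CLexLt, zero_re, zero_im, sub_re, sub_im, sub_pos, sub_eq_zero, eq_comm (a := (0 : ℝ)),
    eq_comm (a := z.re)]

/-- The directions `d` with `Arg d ∈ (-π, -5π/6] ∪ (-π/6, π/6] ∪ (5π/6, π]`. -/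
def IsNearHorizontal (d : ℂ) : Prop :=
  (-d.re < √3 * d.im ∧ √3 * d.im ≤ d.re) ∨ (d.re ≤ √3 * d.im ∧ √3 * d.im < -d.re)

open Real in
theorem sin_add_sub_pi_div_six_signs {θ : ℝ} (hθ : θ ∈ Set.Ioc (-π) π)
    (h : θ ∉ Set.Ioc (-(5 * π) / 6) (-π / 6) ∪ Set.Ioc (π / 6) (5 * π / 6)) :
    (0 < Real.sin (θ + π / 6) ∧ Real.sin (θ - π / 6) ≤ 0) ∨
      (Real.sin (θ + π / 6) < 0 ∧ 0 ≤ Real.sin (θ - π / 6)) := by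
  obtain ⟨hlo, hhi⟩ := hθ
  simp only [Set.mem_union, Set.mem_Ioc, not_or, not_and, not_le] at h
  obtain ⟨hneg, hpos⟩ := h
  rcases le_or_gt θ (-(5 * π) / 6) with hθ₁ | hθ₁
  · refine .inr ⟨sin_neg_of_neg_of_neg_pi_lt (by linarith) (by linarith), ?_⟩
    have := sin_nonpos_of_nonpos_of_neg_pi_le (x := θ - π / 6 + π) (by linarith) (by linarith)
    rw [Real.sin_add_pi] at this
    linarith
  rcases le_or_gt θ (π / 6) with hθ₂ | hθ₂
  · have := hneg hθ₁
    exact .inl ⟨sin_pos_of_pos_of_lt_pi (by linarith) (by linarith),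
      sin_nonpos_of_nonpos_of_neg_pi_le (by linarith) (by linarith)⟩
  · have := hpos hθ₂
    refine .inr ⟨?_, sin_nonneg_of_nonneg_of_le_pi (by linarith) (by linarith)⟩
    have := sin_pos_of_pos_of_lt_pi (x := θ + π / 6 - π) (by linarith) (by linarith)
    rw [Real.sin_sub_pi] at this
    linarith

theorem isNearHorizontal_of_arg_notMem {d : ℂ} (hd : d ≠ 0)
    (h : arg d ∉ Set.Ioc (-(5 * Real.pi) / 6) (-Real.pi / 6) ∪
      Set.Ioc (Real.pi / 6) (5 * Real.pi / 6)) :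
    IsNearHorizontal d := by
  have hr : 0 < ‖d‖ := norm_pos_iff.mpr hd
  have hplus : √3 * d.im + d.re = 2 * ‖d‖ * Real.sin (arg d + Real.pi / 6) := by
    rw [Real.sin_add, Real.sin_pi_div_six, Real.cos_pi_div_six, ← norm_mul_cos_arg d,
      ← norm_mul_sin_arg d]
    ring
  have hminus : √3 * d.im - d.re = 2 * ‖d‖ * Real.sin (arg d - Real.pi / 6) := by
    rw [Real.sin_sub, Real.sin_pi_div_six, Real.cos_pi_div_six, ← norm_mul_cos_arg d,
      ← norm_mul_sin_arg d]
    ring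
  rcases sin_add_sub_pi_div_six_signs ⟨neg_pi_lt_arg d, arg_le_pi d⟩ h with ⟨h₁, h₂⟩ | ⟨h₁, h₂⟩
  · left
    constructor <;> nlinarith [mul_pos hr h₁, mul_nonpos_of_nonneg_of_nonpos hr.le h₂]
  · right
    constructor <;> nlinarith [mul_neg_of_pos_of_neg hr h₁, mul_nonneg hr.le h₂]

theorem IsNearHorizontal.not_zero_clexLt_rotations {ζ d : ℂ} (hd : IsNearHorizontal d)
    (hre : ζ.re = 1 / 2) (him : ζ.im = √3 / 2) :
    ¬(CLexLt 0 (conj ζ * d) ∧ CLexLt 0 (-(ζ * d))) ∧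
      ¬(CLexLt 0 (ζ * d) ∧ CLexLt 0 (-(conj ζ * d))) := by
  have hs : √3 * √3 = 3 := Real.mul_self_sqrt (by norm_num)
  have hs₀ : 0 ≤ √3 := Real.sqrt_nonneg 3
  simp only [CLexLt, zero_re, zero_im, mul_re, mul_im, neg_re, neg_im, conj_re, conj_im, hre, him]
  -- In each case one real part has the wrong sign; on the boundary ray `Re d = √3 Im d`
  -- the real part vanishes and the imaginary part decides.
  rcases hd with ⟨h₁, h₂⟩ | ⟨h₁, h₂⟩
  · constructor
    · rintro ⟨-, h | ⟨h, h'⟩⟩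
      · linarith
      · have : d.re = √3 * d.im := by linarith
        nlinarith
    · rintro ⟨-, h | ⟨h, h'⟩⟩ <;> linarith
  · constructor
    · rintro ⟨h | ⟨h, h'⟩, -⟩ <;> linarith
    · rintro ⟨h | ⟨h, h'⟩, -⟩
      · linarith
      · have : d.re = √3 * d.im := by linarith
        nlinarith

theorem stmt_12 (u v : ℂ) (huv : u ≠ v)
    (ζ : ℂ) (hζ : ζ = Complex.exp (Real.pi * Complex.I / 3))
    (w w' : ℂ) (hw : w = ζ * u + (starRingEnd ℂ) ζ * v)
    (hw' : w' = (starRingEnd ℂ) ζ * u + ζ * v)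
    (harg : Complex.arg (v - u) ∉
      Set.Ioc (-(5 * Real.pi) / 6) (-Real.pi / 6) ∪
        Set.Ioc (Real.pi / 6) (5 * Real.pi / 6)) :
    ¬(CLexLt u w ∧ CLexLt v w) ∧ ¬(CLexLt u w' ∧ CLexLt v w') ∧
    ¬(CLexLt w u ∧ CLexLt w v) ∧ ¬(CLexLt w' u ∧ CLexLt w' v) := by
  have hζ' : ζ = exp ((Real.pi / 3 : ℝ) * I) := by rw [hζ]; push_cast; ring_nf
  have hre : ζ.re = 1 / 2 := by rw [hζ', exp_ofReal_mul_I_re, Real.cos_pi_div_three]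
  have him : ζ.im = √3 / 2 := by rw [hζ', exp_ofReal_mul_I_im, Real.sin_pi_div_three]
  have hsum : ζ + conj ζ = 1 := by rw [add_conj, hre]; norm_num
  obtain ⟨hup, hdown⟩ := (isNearHorizontal_of_arg_notMem (sub_ne_zero.2 huv.symm)
    harg).not_zero_clexLt_rotations hre him
  have hwu : w - u = conj ζ * (v - u) := by rw [hw]; linear_combination u * hsum
  have hwv : w - v = -(ζ * (v - u)) := by rw [hw]; linear_combination v * hsum
  have hw'u : w' - u = ζ * (v - u) := by rw [hw']; linear_combination u * hsum
  have hw'v : w' - v = -(conj ζ * (v - u)) := by rw [hw']; linear_combination v * hsum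
  simp only [clexLt_iff_zero_clexLt_sub (y := u), clexLt_iff_zero_clexLt_sub (y := v),
    clexLt_iff_zero_clexLt_sub (y := w), clexLt_iff_zero_clexLt_sub (y := w')]
  rw [← neg_sub w u, ← neg_sub w v, ← neg_sub w' u, ← neg_sub w' v, hwu, hwv, hw'u, hw'v, neg_neg,
    neg_neg]
  exact ⟨hup, hdown, fun h => hdown h.symm, fun h => hup h.symm⟩
end

section
/- Let V be an n-point subset of the plane ℝ². Then the number of 3-element subsets of V forming an equilateral triangle is at most ⌊(n-1)²/4⌋. -/
/-! Order `ℂ` lexicographically by `(re, im)`; this linear order is compatible with addition.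
The two apexes `c ≠ c'` of equilateral triangles over a base `{a, b}` satisfy `c + c' = a + b`,
so if `a < b` at most one of them lies above `b`, and symmetrically for apexes below the top
edge. Hence a triangle `a < b < c` is determined by its middle vertex `b` together with either
`a` or `c`, so at most `min #{a < b} #{c > b}` triangles have middle vertex `b`; summing over
`b` gives at most `∑ i < n, min i (n - 1 - i) = (n - 1)² / 4`. -/

attribute [local instance] Classical.propDecidable

open Finset

section Counting

variable {β : Type*} [LinearOrder β]

theorem Finset.exists_lt_lt_of_card_eq_three {P : Finset β} (h : #P = 3) :
    ∃ a b c, a < b ∧ b < c ∧ P = {a, b, c} := by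
  set f := P.orderEmbOfFin h
  refine ⟨f 0, f 1, f 2, f.strictMono (by decide), f.strictMono (by decide), ?_⟩
  ext x
  rw [← mem_coe, ← range_orderEmbOfFin P h, Set.mem_range, Fin.exists_fin_succ,
    Fin.exists_fin_two]
  simp only [mem_insert, mem_singleton, eq_comm]
  rfl

theorem sum_range_min_sub_eq : ∀ n : ℕ, ∑ i ∈ range n, min i (n - 1 - i) = (n - 1) ^ 2 / 4
  | 0 => rfl
  | 1 => rfl
  | n + 2 => by
    have hshift :
        ∀ i ∈ range n, min (i + 1) (n + 2 - 1 - (i + 1)) = min i (n - 1 - i) + 1 := by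
      intro i hi
      rw [mem_range] at hi
      omega
    rw [sum_range_succ, sum_range_succ', sum_congr rfl hshift, sum_add_distrib,
      sum_range_min_sub_eq n]
    rcases n with _ | m
    · rfl
    · have : (m + 1 + 2 - 1) ^ 2 = m ^ 2 + (m + 1) * 4 := by
        rw [show m + 1 + 2 - 1 = m + 2 by omega]; ring
      rw [this, Nat.add_mul_div_right _ _ (by norm_num)]
      simp

theorem sum_min_card_filter_lt_card_filter_gt_le (V : Finset β) :
    ∑ b ∈ V, min #{a ∈ V | a < b} #{c ∈ V | b < c} ≤ (#V - 1) ^ 2 / 4 := by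
  set L : β → ℕ := fun b => #{a ∈ V | a < b}
  have hL_lt : ∀ b ∈ V, L b < #V := fun b hb =>
    card_lt_card (filter_ssubset.2 ⟨b, hb, lt_irrefl b⟩)
  have hL_add : ∀ b ∈ V, L b + #{c ∈ V | b < c} ≤ #V - 1 := by
    intro b hb
    rw [← card_erase_of_mem hb, ← card_union_of_disjoint
      (disjoint_filter.2 fun _ _ h₁ h₂ => lt_asymm h₁ h₂)]
    refine card_le_card fun x hx => ?_
    simp only [mem_union, mem_filter] at hx
    rcases hx with ⟨hx, hxb⟩ | ⟨hx, hbx⟩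
    · exact mem_erase.2 ⟨hxb.ne, hx⟩
    · exact mem_erase.2 ⟨hbx.ne', hx⟩
  have hL_mono : StrictMonoOn L V := fun b hb b' _ hbb' =>
    card_lt_card <| (ssubset_iff_of_subset fun _ hx => by
      rw [mem_filter] at hx ⊢; exact ⟨hx.1, hx.2.trans hbb'⟩).2
      ⟨b, mem_filter.2 ⟨hb, hbb'⟩, by simp⟩
  calc ∑ b ∈ V, min (L b) #{c ∈ V | b < c}
      ≤ ∑ b ∈ V, min (L b) (#V - 1 - L b) :=
        sum_le_sum fun b hb => min_le_min_left _ (by have := hL_add b hb; omega)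
    _ = ∑ i ∈ V.image L, min i (#V - 1 - i) :=
        (sum_image (f := fun i => min i (#V - 1 - i)) hL_mono.injOn).symm
    _ ≤ ∑ i ∈ range #V, min i (#V - 1 - i) :=
        sum_le_sum_of_subset (image_subset_iff.2 fun b hb => mem_range.2 (hL_lt b hb))
    _ = (#V - 1) ^ 2 / 4 := sum_range_min_sub_eq _

theorem eq_of_mem_insert_of_lt_of_lt {a x b c : β} (hx : x ∈ ({a, b, c} : Finset β))
    (hxb : x < b) (hbc : b < c) : x = a := by
  simp only [mem_insert, mem_singleton] at hx
  rcases hx with rfl | rfl | rfl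
  · rfl
  · exact absurd hxb (lt_irrefl _)
  · exact absurd (hxb.trans hbc) (lt_irrefl _)

theorem eq_of_mem_insert_of_lt_of_lt' {a b c x : β} (hx : x ∈ ({a, b, c} : Finset β))
    (hab : a < b) (hbx : b < x) : x = c := by
  simp only [mem_insert, mem_singleton] at hx
  rcases hx with rfl | rfl | rfl
  · exact absurd (hab.trans hbx) (lt_irrefl _)
  · exact absurd hbx (lt_irrefl _)
  · rfl

variable {V : Finset β} {T : Finset (Finset β)}

theorem card_filter_eq_triple_le_card_filter_lt (hTV : ∀ P ∈ T, P ⊆ V)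
    (hTtop : ∀ a b c c', a < b → b < c → b < c' →
      {a, b, c} ∈ T → {a, b, c'} ∈ T → c = c')
    (b : β) :
    #{P ∈ T | ∃ a c, a < b ∧ b < c ∧ P = {a, b, c}} ≤ #{a ∈ V | a < b} := by
  refine card_le_card_of_forall_subsingleton (fun P a => a ∈ P ∧ a < b) ?_ ?_
  · simp only [mem_filter]
    rintro P ⟨hP, a, c, hab, -, rfl⟩
    exact ⟨a, ⟨hTV _ hP (by simp), hab⟩, by simp, hab⟩
  · rintro a - P ⟨hP, haP, hab⟩ P' ⟨hP', haP', -⟩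
    simp only [mem_filter] at hP hP'
    obtain ⟨hP, a₁, c, -, hbc, rfl⟩ := hP
    obtain ⟨hP', a₂, c', -, hbc', rfl⟩ := hP'
    obtain rfl := eq_of_mem_insert_of_lt_of_lt haP hab hbc
    obtain rfl := eq_of_mem_insert_of_lt_of_lt haP' hab hbc'
    rw [hTtop a b c c' hab hbc hbc' hP hP']

theorem card_filter_eq_triple_le_card_filter_gt (hTV : ∀ P ∈ T, P ⊆ V)
    (hTbot : ∀ a a' b c, a < b → a' < b → b < c →
      {a, b, c} ∈ T → {a', b, c} ∈ T → a = a')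
    (b : β) :
    #{P ∈ T | ∃ a c, a < b ∧ b < c ∧ P = {a, b, c}} ≤ #{c ∈ V | b < c} := by
  refine card_le_card_of_forall_subsingleton (fun P c => c ∈ P ∧ b < c) ?_ ?_
  · simp only [mem_filter]
    rintro P ⟨hP, a, c, -, hbc, rfl⟩
    exact ⟨c, ⟨hTV _ hP (by simp), hbc⟩, by simp, hbc⟩
  · rintro c - P ⟨hP, hcP, hbc⟩ P' ⟨hP', hcP', -⟩
    simp only [mem_filter] at hP hP'
    obtain ⟨hP, a, c₁, hab, -, rfl⟩ := hP
    obtain ⟨hP', a', c₂, hab', -, rfl⟩ := hP'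
    obtain rfl := eq_of_mem_insert_of_lt_of_lt' hcP hab hbc
    obtain rfl := eq_of_mem_insert_of_lt_of_lt' hcP' hab' hbc
    rw [hTbot a a' b c hab hab' hbc hP hP']

theorem card_le_of_apex_unique (hT : ∀ P ∈ T, P ⊆ V ∧ #P = 3)
    (hTtop : ∀ a b c c', a < b → b < c → b < c' →
      {a, b, c} ∈ T → {a, b, c'} ∈ T → c = c')
    (hTbot : ∀ a a' b c, a < b → a' < b → b < c →
      {a, b, c} ∈ T → {a', b, c} ∈ T → a = a') :
    #T ≤ (#V - 1) ^ 2 / 4 := by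
  have hTV : ∀ P ∈ T, P ⊆ V := fun P hP => (hT P hP).1
  have hcover :
      T ⊆ V.biUnion fun b => {P ∈ T | ∃ a c, a < b ∧ b < c ∧ P = {a, b, c}} := by
    intro P hP
    obtain ⟨a, b, c, hab, hbc, rfl⟩ := exists_lt_lt_of_card_eq_three (hT P hP).2
    exact mem_biUnion.2 ⟨b, hTV _ hP (by simp), mem_filter.2 ⟨hP, a, c, hab, hbc, rfl⟩⟩
  calc #T ≤ ∑ b ∈ V, #{P ∈ T | ∃ a c, a < b ∧ b < c ∧ P = {a, b, c}} :=
        (card_le_card hcover).trans card_biUnion_le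
    _ ≤ ∑ b ∈ V, min #{a ∈ V | a < b} #{c ∈ V | b < c} :=
        sum_le_sum fun b _ => le_min (card_filter_eq_triple_le_card_filter_lt hTV hTtop b)
          (card_filter_eq_triple_le_card_filter_gt hTV hTbot b)
    _ ≤ (#V - 1) ^ 2 / 4 := sum_min_card_filter_lt_card_filter_gt_le V

end Counting

def IsEquilateral {E : Type*} [SeminormedAddCommGroup E] (P : Finset E) : Prop :=
  ∃ d : ℝ, 0 < d ∧ ∀ x ∈ P, ∀ y ∈ P, x ≠ y → ‖x - y‖ = d

theorem IsEquilateral.norm_sub_eq {E : Type*} [SeminormedAddCommGroup E] {P : Finset E}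
    (hP : IsEquilateral P) {x y z w : E} (hx : x ∈ P) (hy : y ∈ P) (hxy : x ≠ y)
    (hz : z ∈ P) (hw : w ∈ P) (hzw : z ≠ w) : ‖x - y‖ = ‖z - w‖ := by
  obtain ⟨d, -, hd⟩ := hP
  rw [hd x hx y hy hxy, hd z hz w hw hzw]

namespace Complex

theorem re_eq_half_and_im_sq_of_norm_eq_one {z : ℂ} (hz : ‖z‖ = 1) (hz1 : ‖z - 1‖ = 1) :
    z.re = 1 / 2 ∧ z.im ^ 2 = 3 / 4 := by
  have h₀ : z.re * z.re + z.im * z.im = 1 := by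
    rw [← normSq_apply, normSq_eq_norm_sq, hz, one_pow]
  have h₁ : (z.re - 1) * (z.re - 1) + z.im * z.im = 1 := by
    simpa [normSq_apply, hz1] using normSq_eq_norm_sq (z - 1)
  constructor <;> nlinarith

theorem eq_or_add_eq_one_of_norm_eq_one {z w : ℂ} (hz : ‖z‖ = 1) (hz1 : ‖z - 1‖ = 1)
    (hw : ‖w‖ = 1) (hw1 : ‖w - 1‖ = 1) : z = w ∨ z + w = 1 := by
  obtain ⟨hzre, hzim⟩ := re_eq_half_and_im_sq_of_norm_eq_one hz hz1
  obtain ⟨hwre, hwim⟩ := re_eq_half_and_im_sq_of_norm_eq_one hw hw1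
  rcases sq_eq_sq_iff_eq_or_eq_neg.1 (hzim.trans hwim.symm) with him | him
  · exact Or.inl (ext (hzre.trans hwre.symm) him)
  · refine Or.inr (ext ?_ ?_) <;> norm_num [hzre, hwre, him]

theorem eq_or_add_eq_of_norm_sub_eq {a b c c' : ℂ} (hca : ‖c - a‖ = ‖b - a‖)
    (hcb : ‖c - b‖ = ‖b - a‖) (hc'a : ‖c' - a‖ = ‖b - a‖) (hc'b : ‖c' - b‖ = ‖b - a‖) :
    c = c' ∨ c + c' = a + b := by
  rcases eq_or_ne b a with rfl | hba
  · simp only [sub_self, norm_zero, norm_eq_zero, sub_eq_zero] at hca hc'a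
    exact Or.inl (hca.trans hc'a.symm)
  have hba' : b - a ≠ 0 := sub_ne_zero.2 hba
  have hnorm : ∀ x : ℂ, ‖x - a‖ = ‖b - a‖ → ‖x - b‖ = ‖b - a‖ →
      ‖(x - a) / (b - a)‖ = 1 ∧ ‖(x - a) / (b - a) - 1‖ = 1 := by
    intro x hxa hxb
    have : (x - a) / (b - a) - 1 = (x - b) / (b - a) := by field_simp; ring
    rw [this, norm_div, norm_div, hxa, hxb, div_self (norm_ne_zero_iff.2 hba'),
      and_self]
  obtain ⟨hz, hz1⟩ := hnorm c hca hcb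
  obtain ⟨hw, hw1⟩ := hnorm c' hc'a hc'b
  rcases eq_or_add_eq_one_of_norm_eq_one hz hz1 hw hw1 with h | h
  · left
    simpa using (div_left_inj' hba').1 h
  · right
    field_simp at h
    linear_combination h

@[reducible]
noncomputable def lexOrder : LinearOrder ℂ :=
  LinearOrder.lift' (fun z => toLex (z.re, z.im)) fun z w h => by
    simpa [Complex.ext_iff] using h

section

attribute [local instance] lexOrder

theorem isOrderedCancelAddMonoid_lexOrder : IsOrderedCancelAddMonoid ℂ :=
  Function.Injective.isOrderedCancelAddMonoid (fun z => toLex (z.re, z.im)) (fun _ _ => rfl)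
    Iff.rfl

attribute [local instance] isOrderedCancelAddMonoid_lexOrder

theorem eq_of_isEquilateral_of_lt {a b c c' : ℂ} (hab : a < b) (hbc : b < c) (hbc' : b < c')
    (h : IsEquilateral ({a, b, c} : Finset ℂ)) (h' : IsEquilateral ({a, b, c'} : Finset ℂ)) :
    c = c' := by
  refine (eq_or_add_eq_of_norm_sub_eq ?_ ?_ ?_ ?_).resolve_right
    (add_lt_add (hab.trans hbc) hbc').ne'
  · exact h.norm_sub_eq (by simp) (by simp) (hab.trans hbc).ne' (by simp) (by simp) hab.ne'
  · exact h.norm_sub_eq (by simp) (by simp) hbc.ne' (by simp) (by simp) hab.ne'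
  · exact h'.norm_sub_eq (by simp) (by simp) (hab.trans hbc').ne' (by simp) (by simp) hab.ne'
  · exact h'.norm_sub_eq (by simp) (by simp) hbc'.ne' (by simp) (by simp) hab.ne'

theorem eq_of_isEquilateral_of_lt' {a a' b c : ℂ} (hab : a < b) (ha'b : a' < b) (hbc : b < c)
    (h : IsEquilateral ({a, b, c} : Finset ℂ)) (h' : IsEquilateral ({a', b, c} : Finset ℂ)) :
    a = a' := by
  refine (eq_or_add_eq_of_norm_sub_eq ?_ ?_ ?_ ?_).resolve_right
    (add_lt_add hab (ha'b.trans hbc)).ne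
  · exact h.norm_sub_eq (by simp) (by simp) hab.ne (by simp) (by simp) hbc.ne'
  · exact h.norm_sub_eq (by simp) (by simp) (hab.trans hbc).ne (by simp) (by simp) hbc.ne'
  · exact h'.norm_sub_eq (by simp) (by simp) ha'b.ne (by simp) (by simp) hbc.ne'
  · exact h'.norm_sub_eq (by simp) (by simp) (ha'b.trans hbc).ne (by simp) (by simp) hbc.ne'

end

end Complex

theorem stmt_15 (n : ℕ) (V : Finset ℂ) (hV : V.card = n) :
    ((V.powersetCard 3).filter
        (fun P => ∃ d : ℝ, 0 < d ∧
          ∀ x ∈ P, ∀ y ∈ P, x ≠ y → ‖x - y‖ = d)).card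
      ≤ (n - 1) ^ 2 / 4 := by
  let _ := Complex.lexOrder
  subst hV
  have hequi {P : Finset ℂ} (hP : P ∈ (V.powersetCard 3).filter IsEquilateral) :
      IsEquilateral P :=
    (mem_filter.1 hP).2
  exact card_le_of_apex_unique (fun P hP => mem_powersetCard.1 (mem_filter.1 hP).1)
    (fun _ _ _ _ hab hbc hbc' hP hP' =>
      Complex.eq_of_isEquilateral_of_lt hab hbc hbc' (hequi hP) (hequi hP'))
    (fun _ _ _ _ hab ha'b hbc hP hP' =>
      Complex.eq_of_isEquilateral_of_lt' hab ha'b hbc (hequi hP) (hequi hP'))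
end

section
/- Let V be a finite subset of ℂ. Then there exists a unit complex number ζ such that the halving lines of V in the three directions ζ, e^{2πi/3}ζ, and e^{4πi/3}ζ are concurrent (pass through a common point). -/
/-!
For `ζ ≠ 0`, the ζ-halving line of `V` is a level set `{p | perpCoord ζ p = c(ζ)}`, where
`perpCoord ζ p = Re (i·conj ζ·p)` is the coordinate that `⪯_ζ` compares first and `c(ζ)` is the
median of the values `perpCoord ζ v`, `v ∈ V`. Written through min–max formulas for order
statistics, `c` is continuous, and reversing the order gives `c(-ζ) = -c(ζ)`. So with
`ω = e^{2πi/3}`, the function `c(ζ) + c(ωζ) + c(ω²ζ)` is continuous and odd, and vanishes at some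
unit `ζ` by the intermediate value theorem on a half-turn. Since `1 + ω + ω² = 0`, the three
coordinates sum to zero, so the common point of the first two halving lines lies on the third.
-/

attribute [local instance] Classical.propDecidable

open Complex

/-- The order `≺_ζ` on ℂ: compare `i·conj ζ·y` and `i·conj ζ·z` lexicographically. -/
def ZetaLt (ζ y z : ℂ) : Prop :=
  (Complex.I * (starRingEnd ℂ) ζ * y).re < (Complex.I * (starRingEnd ℂ) ζ * z).re ∨
    ((Complex.I * (starRingEnd ℂ) ζ * y).re = (Complex.I * (starRingEnd ℂ) ζ * z).re ∧
      (Complex.I * (starRingEnd ℂ) ζ * y).im < (Complex.I * (starRingEnd ℂ) ζ * z).im)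

/-- `m` is the ζ-median of the finite set `V`: the middle element when `|V|` is odd,
and the average of the two middle elements when `|V|` is even. -/
def IsZetaMedian (ζ : ℂ) (V : Finset ℂ) (m : ℂ) : Prop :=
  (Odd V.card ∧ m ∈ V ∧ (V.filter (fun z => ZetaLt ζ z m)).card = (V.card - 1) / 2) ∨
  (Even V.card ∧ ∃ a ∈ V, ∃ b ∈ V, m = (a + b) / 2 ∧
    (V.filter (fun z => ZetaLt ζ z a)).card = V.card / 2 - 1 ∧
    (V.filter (fun z => ZetaLt ζ z b)).card = V.card / 2)

open Finset ComplexConjugate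

section OrderStatistic

variable {ι β : Type*}

theorem Finset.exists_mem_card_filter_lt_le_and_lt_card_filter_le [LinearOrder β] (V : Finset ι)
    (f : ι → β) {k : ℕ} (hk : k < #V) :
    ∃ a ∈ V, #{z ∈ V | f z < f a} ≤ k ∧ k < #{z ∈ V | f z ≤ f a} := by
  have hne : {x ∈ V | k < #{z ∈ V | f z ≤ f x}}.Nonempty := by
    obtain ⟨b, hb, hmax⟩ := V.exists_max_image f (card_pos.mp (by omega))
    exact ⟨b, mem_filter.mpr ⟨hb, by rwa [filter_true_of_mem hmax]⟩⟩
  obtain ⟨a, ha, hmin⟩ := exists_min_image _ f hne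
  rw [mem_filter] at ha
  refine ⟨a, ha.1, ?_, ha.2⟩
  by_contra! hlt
  obtain ⟨z, hz, hzmax⟩ := exists_max_image {z ∈ V | f z < f a} f (card_pos.mp (by omega))
  rw [mem_filter] at hz
  have hzle : k < #{w ∈ V | f w ≤ f z} :=
    hlt.trans_le <| card_le_card fun w hw => mem_filter.mpr ⟨(mem_filter.mp hw).1, hzmax w hw⟩
  exact hz.2.not_ge (hmin z (mem_filter.mpr ⟨hz.1, hzle⟩))

theorem Finset.exists_mem_card_filter_lt_eq [LinearOrder β] (V : Finset ι) {f : ι → β}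
    (hf : Set.InjOn f V) {k : ℕ} (hk : k < #V) : ∃ a ∈ V, #{z ∈ V | f z < f a} = k := by
  obtain ⟨a, ha, hlt, hle⟩ := V.exists_mem_card_filter_lt_le_and_lt_card_filter_le f hk
  refine ⟨a, ha, hlt.antisymm ?_⟩
  have hsub : {z ∈ V | f z ≤ f a} ⊆ insert a {z ∈ V | f z < f a} := fun z hz => by
    rw [mem_filter] at hz
    rcases hz.2.lt_or_eq with h | h
    · exact mem_insert_of_mem (mem_filter.mpr ⟨hz.1, h⟩)
    · exact mem_insert.mpr (Or.inl (hf hz.1 ha h))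
  have := (card_le_card hsub).trans (card_insert_le _ _)
  omega

/-- The `k`-th smallest value of `f` on `V`, counted from `0` and with repetitions; it is `0`
when `#V ≤ k`. The min–max form makes continuity in `f` evident. -/
noncomputable def orderStat (V : Finset ι) (f : ι → ℝ) (k : ℕ) : ℝ :=
  if hk : k < #V then
    (V.powersetCard (k + 1)).attach.inf' (attach_nonempty_iff.mpr (powersetCard_nonempty.mpr hk))
      fun S => S.1.sup' (card_pos.mp (by rw [(mem_powersetCard.mp S.2).2]; omega)) f
  else 0

theorem orderStat_eq {V : Finset ι} {f : ι → ℝ} {k : ℕ} {a : ι}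
    (hlt : #{z ∈ V | f z < f a} ≤ k) (hle : k < #{z ∈ V | f z ≤ f a}) :
    orderStat V f k = f a := by
  rw [orderStat, dif_pos (hle.trans_le (card_filter_le _ _))]
  apply le_antisymm
  · obtain ⟨S, hS, hcard⟩ := exists_subset_card_eq hle
    have hSmem : S ∈ V.powersetCard (k + 1) :=
      mem_powersetCard.mpr ⟨hS.trans (filter_subset _ _), hcard⟩
    exact (inf'_le _ (mem_attach _ ⟨S, hSmem⟩)).trans
      (sup'_le _ _ fun z hz => (mem_filter.mp (hS hz)).2)
  · refine le_inf' _ _ fun S _ => ?_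
    by_contra! h
    have hsub : S.1 ⊆ {z ∈ V | f z < f a} := fun z hz =>
      mem_filter.mpr ⟨(mem_powersetCard.mp S.2).1 hz, (le_sup' f hz).trans_lt h⟩
    have := card_le_card hsub
    rw [(mem_powersetCard.mp S.2).2] at this
    omega

theorem orderStat_neg {V : Finset ι} (f : ι → ℝ) {k l : ℕ} (h : k + l + 1 = #V) :
    orderStat V (-f) k = -orderStat V f l := by
  obtain ⟨a, -, hlt, hle⟩ :=
    V.exists_mem_card_filter_lt_le_and_lt_card_filter_le f (k := l) (by omega)
  rw [orderStat_eq hlt hle, orderStat_eq (f := -f), Pi.neg_apply]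
  · have := card_filter_add_card_filter_not (s := V) (fun z => f z ≤ f a)
    simp only [Pi.neg_apply, neg_lt_neg_iff, not_le] at this ⊢
    omega
  · have := card_filter_add_card_filter_not (s := V) (fun z => f z < f a)
    simp only [Pi.neg_apply, neg_le_neg_iff, not_lt] at this ⊢
    omega

theorem continuous_orderStat {X : Type*} [TopologicalSpace X] (V : Finset ι) {f : X → ι → ℝ}
    (hf : ∀ i, Continuous fun x => f x i) (k : ℕ) : Continuous fun x => orderStat V (f x) k := by
  unfold orderStat
  split_ifs
  · exact Continuous.finset_inf'_apply _ fun S _ => Continuous.finset_sup'_apply _ fun i _ => hf i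
  · exact continuous_const

end OrderStatistic

/-- The coordinate that `⪯_ζ` compares first; for `ζ ≠ 0` its level sets are the lines of
direction `ζ`. -/
def perpCoord (ζ v : ℂ) : ℝ := (I * conj ζ * v).re

@[simp]
theorem perpCoord_add (ζ v w : ℂ) : perpCoord ζ (v + w) = perpCoord ζ v + perpCoord ζ w := by
  simp [perpCoord, mul_add]

@[simp]
theorem perpCoord_ofReal_mul (ζ v : ℂ) (t : ℝ) : perpCoord ζ (t * v) = t * perpCoord ζ v := by
  simp only [perpCoord, mul_left_comm _ (t : ℂ), re_ofReal_mul]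

theorem perpCoord_add_left (ζ ξ v : ℂ) : perpCoord (ζ + ξ) v = perpCoord ζ v + perpCoord ξ v := by
  simp [perpCoord, add_mul, mul_add]

theorem perpCoord_neg_left (ζ : ℂ) : perpCoord (-ζ) = -perpCoord ζ := by
  funext v
  simp [perpCoord]

theorem perpCoord_mul_left_self (w ζ : ℂ) : perpCoord (w * ζ) ζ = normSq ζ * w.im := by
  rw [perpCoord, map_mul, mul_assoc, mul_assoc, ← normSq_eq_conj_mul_self]
  simp [mul_comm]

@[simp]
theorem perpCoord_self (ζ : ℂ) : perpCoord ζ ζ = 0 := by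
  simpa using perpCoord_mul_left_self 1 ζ

theorem perpCoord_midpoint (ζ a b : ℂ) :
    perpCoord ζ ((a + b) / 2) = (perpCoord ζ a + perpCoord ζ b) / 2 := by
  have h := perpCoord_ofReal_mul ζ (a + b) 2⁻¹
  push_cast at h
  rw [div_eq_inv_mul, h, perpCoord_add]
  ring

theorem continuous_perpCoord_left (v : ℂ) : Continuous fun ζ => perpCoord ζ v := by
  unfold perpCoord
  fun_prop

theorem exists_eq_add_ofReal_mul_of_perpCoord_eq {ζ p m : ℂ} (hζ : ζ ≠ 0)
    (h : perpCoord ζ p = perpCoord ζ m) : ∃ t : ℝ, p = m + t * ζ := by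
  set u := (p - m) / ζ
  have hp : p = m + u * ζ := by simp [u, div_mul_cancel₀ _ hζ]
  have hu : u.im = 0 := by
    have h' : perpCoord ζ (u * ζ) = 0 := by simp [perpCoord, hp] at h ⊢; linarith
    rw [perpCoord, mul_comm u, ← mul_assoc, mul_assoc I, ← normSq_eq_conj_mul_self] at h'
    simpa [hζ] using h'
  exact ⟨u.re, by rw [hp, ← re_add_im u, hu]; simp⟩

def zetaKey (ζ v : ℂ) : ℝ ×ₗ ℝ := toLex ((I * conj ζ * v).re, (I * conj ζ * v).im)

theorem zetaLt_iff_zetaKey_lt (ζ y z : ℂ) : ZetaLt ζ y z ↔ zetaKey ζ y < zetaKey ζ z := by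
  rw [zetaKey, zetaKey, Prod.Lex.toLex_lt_toLex]
  rfl

theorem zetaKey_injective {ζ : ℂ} (hζ : ζ ≠ 0) : Function.Injective (zetaKey ζ) := by
  intro y z h
  simp only [zetaKey, toLex_inj, Prod.mk.injEq] at h
  exact mul_left_cancel₀ (by simpa using hζ) (Complex.ext h.1 h.2)

theorem exists_card_zetaLt_eq {ζ : ℂ} (hζ : ζ ≠ 0) (V : Finset ℂ) {k : ℕ} (hk : k < #V) :
    ∃ a ∈ V, #{z ∈ V | ZetaLt ζ z a} = k := by
  simpa only [zetaLt_iff_zetaKey_lt] using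
    V.exists_mem_card_filter_lt_eq (zetaKey_injective hζ).injOn hk

theorem perpCoord_le_of_zetaLt {ζ y z : ℂ} (h : ZetaLt ζ y z) : perpCoord ζ y ≤ perpCoord ζ z := by
  rcases h with h | ⟨h, -⟩
  exacts [h.le, h.le]

theorem orderStat_perpCoord_of_card_zetaLt {ζ a : ℂ} {V : Finset ℂ} {k : ℕ} (ha : a ∈ V)
    (hk : #{z ∈ V | ZetaLt ζ z a} = k) : orderStat V (perpCoord ζ) k = perpCoord ζ a := by
  subst hk
  refine orderStat_eq (card_le_card fun z hz => ?_) ?_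
  · rw [mem_filter] at hz ⊢
    exact ⟨hz.1, Or.inl hz.2⟩
  · have hsub : insert a {z ∈ V | ZetaLt ζ z a} ⊆ {z ∈ V | perpCoord ζ z ≤ perpCoord ζ a} :=
      insert_subset (mem_filter.mpr ⟨ha, le_rfl⟩) fun z hz =>
        mem_filter.mpr ⟨(mem_filter.mp hz).1, perpCoord_le_of_zetaLt (mem_filter.mp hz).2⟩
    have hnotMem : a ∉ {z ∈ V | ZetaLt ζ z a} := by
      simp [zetaLt_iff_zetaKey_lt]
    have := card_le_card hsub
    rwa [card_insert_of_notMem hnotMem] at this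

/-- The value of `perpCoord ζ` at the ζ-median of `V` (the two indices agree when `#V` is odd). -/
noncomputable def medianOffset (V : Finset ℂ) (ζ : ℂ) : ℝ :=
  (orderStat V (perpCoord ζ) ((#V - 1) / 2) + orderStat V (perpCoord ζ) (#V / 2)) / 2

theorem exists_isZetaMedian {ζ : ℂ} (hζ : ζ ≠ 0) {V : Finset ℂ} (hV : V.Nonempty) :
    ∃ m, IsZetaMedian ζ V m ∧ perpCoord ζ m = medianOffset V ζ := by
  have hpos := hV.card_pos
  rcases Nat.even_or_odd #V with heven | hodd
  · obtain ⟨a, haV, ha⟩ := exists_card_zetaLt_eq hζ V (k := #V / 2 - 1) (by omega)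
    obtain ⟨b, hbV, hb⟩ := exists_card_zetaLt_eq hζ V (k := #V / 2) (by omega)
    refine ⟨(a + b) / 2, Or.inr ⟨heven, a, haV, b, hbV, rfl, ha, hb⟩, ?_⟩
    have hidx : (#V - 1) / 2 = #V / 2 - 1 := by rcases heven with ⟨r, hr⟩; omega
    rw [perpCoord_midpoint, medianOffset, hidx, orderStat_perpCoord_of_card_zetaLt haV ha,
      orderStat_perpCoord_of_card_zetaLt hbV hb]
  · obtain ⟨a, haV, ha⟩ := exists_card_zetaLt_eq hζ V (k := (#V - 1) / 2) (by omega)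
    refine ⟨a, Or.inl ⟨hodd, haV, ha⟩, ?_⟩
    have hidx : #V / 2 = (#V - 1) / 2 := by rcases hodd with ⟨r, hr⟩; omega
    rw [medianOffset, hidx, orderStat_perpCoord_of_card_zetaLt haV ha]
    ring

theorem medianOffset_neg {V : Finset ℂ} (hV : V.Nonempty) (ζ : ℂ) :
    medianOffset V (-ζ) = -medianOffset V ζ := by
  have hpos := hV.card_pos
  rw [medianOffset, medianOffset, perpCoord_neg_left, orderStat_neg _ (l := #V / 2) (by omega),
    orderStat_neg _ (l := (#V - 1) / 2) (by omega)]
  ring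

@[fun_prop]
theorem continuous_medianOffset (V : Finset ℂ) : Continuous (medianOffset V) :=
  ((continuous_orderStat V continuous_perpCoord_left _).add
    (continuous_orderStat V continuous_perpCoord_left _)).div_const 2

theorem exists_norm_eq_one_eq_zero_of_odd {g : ℂ → ℝ} (hg : Continuous g)
    (hodd : ∀ ζ, g (-ζ) = -g ζ) : ∃ ζ : ℂ, ‖ζ‖ = 1 ∧ g ζ = 0 := by
  set h : ℝ → ℝ := fun θ => g (exp (θ * I))
  have hh : Continuous h := hg.comp (by fun_prop)
  have hπ : h Real.pi = -h 0 := by simp [h, exp_pi_mul_I, hodd]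
  obtain ⟨θ, hθ⟩ : ∃ θ, h θ = 0 := by
    rcases le_total (h 0) 0 with h0 | h0
    · exact intermediate_value_univ₂ (a := 0) (b := Real.pi) hh continuous_const h0 (by linarith)
    · exact intermediate_value_univ₂ (a := Real.pi) (b := 0) hh continuous_const (by linarith) h0
  exact ⟨_, norm_exp_ofReal_mul_I θ, hθ⟩

/-- The three functionals `perpCoord` sum to zero, and the first two lines meet because `ω₁` is
not real. -/
theorem exists_mem_lines_of_perpCoord_sum_eq_zero {ζ ω₁ ω₂ m₁ m₂ m₃ : ℂ} (hζ : ζ ≠ 0)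
    (hω₁ : ω₁.im ≠ 0) (hω : 1 + ω₁ + ω₂ = 0)
    (hm : perpCoord ζ m₁ + perpCoord (ω₁ * ζ) m₂ + perpCoord (ω₂ * ζ) m₃ = 0) :
    ∃ p : ℂ, (∃ t : ℝ, p = m₁ + t * ζ) ∧ (∃ t : ℝ, p = m₂ + t * (ω₁ * ζ)) ∧
      (∃ t : ℝ, p = m₃ + t * (ω₂ * ζ)) := by
  have hsum (v : ℂ) : perpCoord ζ v + perpCoord (ω₁ * ζ) v + perpCoord (ω₂ * ζ) v = 0 := by
    rw [← perpCoord_add_left, ← perpCoord_add_left,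
      show ζ + ω₁ * ζ + ω₂ * ζ = (1 + ω₁ + ω₂) * ζ by ring, hω, zero_mul]
    simp [perpCoord]
  have hcross : perpCoord (ω₁ * ζ) ζ ≠ 0 := by
    rw [perpCoord_mul_left_self]
    exact mul_ne_zero (normSq_pos.mpr hζ).ne' hω₁
  set t := (perpCoord (ω₁ * ζ) m₂ - perpCoord (ω₁ * ζ) m₁) / perpCoord (ω₁ * ζ) ζ
  set p := m₁ + t * ζ
  have h₁ : perpCoord ζ p = perpCoord ζ m₁ := by simp [p]
  have h₂ : perpCoord (ω₁ * ζ) p = perpCoord (ω₁ * ζ) m₂ := by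
    simp only [p, t, perpCoord_add, perpCoord_ofReal_mul]
    field_simp
    ring
  have h₃ : perpCoord (ω₂ * ζ) p = perpCoord (ω₂ * ζ) m₃ := by linarith [hsum p, hsum m₁]
  have hω₁0 : ω₁ ≠ 0 := by rintro rfl; simp at hω₁
  have hω₂0 : ω₂ ≠ 0 := by
    rintro rfl
    exact hω₁ (by simp [show ω₁ = -1 by linear_combination hω])
  exact ⟨p, ⟨t, rfl⟩, exists_eq_add_ofReal_mul_of_perpCoord_eq (mul_ne_zero hω₁0 hζ) h₂,
    exists_eq_add_ofReal_mul_of_perpCoord_eq (mul_ne_zero hω₂0 hζ) h₃⟩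

theorem one_add_exp_two_pi_I_div_three_add_exp_four_pi_I_div_three :
    1 + exp (2 * Real.pi * I / 3) + exp (4 * Real.pi * I / 3) = 0 := by
  have hprim : IsPrimitiveRoot (exp (2 * Real.pi * I / 3)) 3 := by
    simpa using isPrimitiveRoot_exp 3 (by norm_num)
  have hsq : exp (4 * Real.pi * I / 3) = exp (2 * Real.pi * I / 3) ^ 2 := by
    rw [← exp_nat_mul]
    congr 1
    push_cast
    ring
  simpa [Finset.sum_range_succ, hsq, add_assoc] using hprim.geom_sum_eq_zero (by norm_num)

theorem exp_two_pi_I_div_three_im_ne_zero : (exp (2 * Real.pi * I / 3)).im ≠ 0 := by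
  rw [show 2 * Real.pi * I / 3 = ((2 * Real.pi / 3 : ℝ) : ℂ) * I by push_cast; ring,
    exp_ofReal_mul_I_im]
  exact (Real.sin_pos_of_pos_of_lt_pi (by positivity) (by linarith [Real.pi_pos])).ne'

theorem stmt_17 (V : Finset ℂ) (hV : V.Nonempty) :
    ∃ ζ : ℂ, ‖ζ‖ = 1 ∧
      ∃ m₁ m₂ m₃ p : ℂ,
        IsZetaMedian ζ V m₁ ∧
        IsZetaMedian (Complex.exp (2 * Real.pi * Complex.I / 3) * ζ) V m₂ ∧
        IsZetaMedian (Complex.exp (4 * Real.pi * Complex.I / 3) * ζ) V m₃ ∧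
        (∃ t : ℝ, p = m₁ + (t : ℂ) * ζ) ∧
        (∃ t : ℝ, p = m₂ + (t : ℂ) * (Complex.exp (2 * Real.pi * Complex.I / 3) * ζ)) ∧
        (∃ t : ℝ, p = m₃ + (t : ℂ) * (Complex.exp (4 * Real.pi * Complex.I / 3) * ζ)) := by
  obtain ⟨ζ, hζ, hzero⟩ := exists_norm_eq_one_eq_zero_of_odd
    (g := fun ζ => medianOffset V ζ + medianOffset V (exp (2 * Real.pi * I / 3) * ζ) +
      medianOffset V (exp (4 * Real.pi * I / 3) * ζ))
    (by fun_prop) (fun ζ => by simp only [mul_neg, medianOffset_neg hV]; ring)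
  have hζ0 : ζ ≠ 0 := norm_ne_zero_iff.mp (hζ ▸ one_ne_zero)
  obtain ⟨m₁, hm₁, h₁⟩ := exists_isZetaMedian hζ0 hV
  obtain ⟨m₂, hm₂, h₂⟩ := exists_isZetaMedian (mul_ne_zero (exp_ne_zero _) hζ0) hV
  obtain ⟨m₃, hm₃, h₃⟩ := exists_isZetaMedian (mul_ne_zero (exp_ne_zero _) hζ0) hV
  obtain ⟨p, hp⟩ := exists_mem_lines_of_perpCoord_sum_eq_zero hζ0
    exp_two_pi_I_div_three_im_ne_zero one_add_exp_two_pi_I_div_three_add_exp_four_pi_I_div_three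
    (by rw [h₁, h₂, h₃]; exact hzero)
  exact ⟨ζ, hζ, m₁, m₂, m₃, p, hm₁, hm₂, hm₃, hp⟩
end

section
/- Let P be the pattern of all sets directly similar to {0,1,3} in ℝ. For any n-point set V ⊆ ℝ, the number of subsets of V directly similar to {0,1,3} is at most ⌊(n-r)(n+r-2)/4⌋ where r = n mod 2, and the set {0,1,…,n-1} contains at least (n-s)(n+s-3)/6 such subsets, where s = n mod 3. -/
attribute [local instance] Classical.propDecidable

/-!
Upper bound: in a copy `{v - a, v, v + 2a}` of `{0, 1, 3}` with middle point `v`, the gap `a` is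
determined both by the left point and by the right point, so at most
`min #{x ∈ V | x < v} #{x ∈ V | v < x}` copies have middle point `v`. Summed over the points of
`V` in increasing order this is `∑ i < n, min i (n - 1 - i)`, the number of 3-term progressions in
`{0, …, n - 1}`.

Lower bound: each 4-term progression `b, b + d, b + 2d, b + 3d` in `{0, …, n - 1}` envelops the
copy `{b, b + d, b + 3d}`, and distinct progressions envelop distinct copies.

Both counts are instances of `∑ a < n, (n - d (a + 1))`, the number of `(d + 1)`-term progressions
in `{0, …, n - 1}`, which equals `(n - n % d) (n + n % d - d) / (2d)`.
-/

open Finset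

lemma sum_range_sub_mul_succ_add {d : ℕ} (hd : 0 < d) (n : ℕ) :
    ∑ a ∈ range (n + d), (n + d - d * (a + 1)) = ∑ a ∈ range n, (n - d * (a + 1)) + n := by
  obtain ⟨e, rfl⟩ : ∃ e, d = e + 1 := ⟨d - 1, by omega⟩
  have hshift (a : ℕ) : n + e + 1 - (e + 1) * (a + 1 + 1) = n - (e + 1) * (a + 1) := by
    rw [mul_add (e + 1) (a + 1) 1]; omega
  have htail (a : ℕ) : n - (e + 1) * (n + a + 1) = 0 :=
    Nat.sub_eq_zero_of_le (by nlinarith)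
  rw [← add_assoc, sum_range_succ', sum_range_add]
  simp only [hshift, htail, sum_const_zero]
  omega

lemma two_mul_mul_sum_range_sub_mul_succ {d : ℕ} (hd : 0 < d) (n : ℕ) :
    2 * d * ∑ a ∈ range n, (n - d * (a + 1)) = (n - n % d) * (n + n % d - d) := by
  induction n using Nat.strong_induction_on with
  | _ n ih =>
  rcases lt_or_ge n d with hn | hn
  · have (a : ℕ) : n - d * (a + 1) = 0 := Nat.sub_eq_zero_of_le (by nlinarith)
    simp [this, Nat.mod_eq_of_lt hn]
  obtain ⟨m, rfl⟩ := Nat.exists_eq_add_of_le' hn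
  rw [sum_range_sub_mul_succ_add hd, mul_add, ih m (by omega), Nat.add_mod_right]
  obtain ⟨q, hq⟩ : d ∣ m - m % d := Nat.dvd_sub_mod m
  obtain ⟨s, hs⟩ : ∃ s, s = m % d := ⟨_, rfl⟩
  obtain rfl : m = d * q + s := by have := Nat.mod_le m d; omega
  rw [← hs, Nat.add_sub_cancel, show d * q + s + d - s = d * q + d by omega,
    show d * q + s + d + s - d = d * q + 2 * s by omega]
  rcases q with _ | q
  · simp only [mul_zero, zero_mul, zero_add]
    ring
  · rw [show d * (q + 1) + s + s - d = d * q + 2 * s by rw [mul_add]; omega]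
    ring

lemma sum_range_min_add_two (n : ℕ) :
    ∑ i ∈ range (n + 2), min i (n + 2 - 1 - i) = ∑ i ∈ range n, min i (n - 1 - i) + n := by
  have hshift (i : ℕ) (hi : i ∈ range n) :
      min (i + 1) (n + 2 - 1 - (i + 1)) = min i (n - 1 - i) + 1 := by
    rw [mem_range] at hi; omega
  rw [sum_range_succ, sum_range_succ', sum_congr rfl hshift, sum_add_distrib]
  simp

lemma sum_range_min_eq (n : ℕ) :
    ∑ i ∈ range n, min i (n - 1 - i) = ∑ a ∈ range n, (n - 2 * (a + 1)) := by
  induction n using Nat.strong_induction_on with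
  | _ n ih =>
  match n with
  | 0 | 1 => simp
  | m + 2 => rw [sum_range_min_add_two, sum_range_sub_mul_succ_add two_pos, ih m (by omega)]

section Rank

variable {α M : Type*} [LinearOrder α] [AddCommMonoid M]

lemma sum_comp_card_filter_lt (V : Finset α) (f : ℕ → M) :
    ∑ v ∈ V, f #{x ∈ V | x < v} = ∑ i ∈ range #V, f i := by
  induction V using Finset.induction_on_max with
  | empty => simp
  | insert m W hm ih =>
    have hmW : m ∉ W := fun h => lt_irrefl m (hm m h)
    have hbelow_m : {x ∈ insert m W | x < m} = W := by
      ext x; simp only [mem_filter, mem_insert]; grind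
    have hbelow (v) (hv : v ∈ W) : {x ∈ insert m W | x < v} = {x ∈ W | x < v} := by
      ext x; simp only [mem_filter, mem_insert]; grind
    rw [sum_insert hmW, hbelow_m, sum_congr rfl fun v hv => by rw [hbelow v hv], ih,
      card_insert_of_notMem hmW, sum_range_succ, add_comm]

lemma card_filter_gt_eq {V : Finset α} {v : α} (hv : v ∈ V) :
    #{x ∈ V | v < x} = #V - 1 - #{x ∈ V | x < v} := by
  have hnot : {x ∈ V | ¬x < v} = insert v {x ∈ V | v < x} := by
    ext x; simp only [mem_filter, mem_insert]; grind
  have := card_filter_add_card_filter_not (s := V) (· < v)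
  rw [hnot, card_insert_of_notMem (by simp)] at this
  omega

end Rank

section Triples

variable {R : Type*} [CommRing R] [LinearOrder R] [IsStrictOrderedRing R]

lemma card_triple (b : R) {a : R} (ha : 0 < a) : #{b, b + a, b + 3 * a} = 3 := by
  rw [card_insert_of_notMem, card_pair (by intro h; linarith)]
  simp only [mem_insert, mem_singleton, not_or]
  constructor <;> intro h <;> linarith

lemma eq_of_triple_eq {b a b' a' : R} (ha : 0 < a) (ha' : 0 < a')
    (h : ({b, b + a, b + 3 * a} : Finset R) = {b', b' + a', b' + 3 * a'}) : b = b' ∧ a = a' := by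
  have hb : b = b' := by
    have h₁ : b ∈ ({b', b' + a', b' + 3 * a'} : Finset R) := h ▸ by simp
    have h₂ : b' ∈ ({b, b + a, b + 3 * a} : Finset R) := h ▸ by simp
    simp only [mem_insert, mem_singleton] at h₁ h₂
    rcases h₁ with h₁ | h₁ | h₁ <;> rcases h₂ with h₂ | h₂ | h₂ <;> linarith
  subst hb
  have h₁ : b + a ∈ ({b, b + a', b + 3 * a'} : Finset R) := h ▸ by simp
  have h₂ : b + a' ∈ ({b, b + a, b + 3 * a} : Finset R) := h ▸ by simp
  simp only [mem_insert, mem_singleton] at h₁ h₂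
  refine ⟨rfl, ?_⟩
  rcases h₁ with h₁ | h₁ | h₁ <;> rcases h₂ with h₂ | h₂ | h₂ <;> linarith

noncomputable def similarTriples (V : Finset R) : Finset (Finset R) :=
  (V.powersetCard 3).filter (fun Q => ∃ b a : R, 0 < a ∧ Q = {b, b + a, b + 3 * a})

/-- The gaps `a > 0` of the copies `{v - a, v, v + 2a}` of `{0, 1, 3}` in `V`. -/
noncomputable def middleGaps (V : Finset R) (v : R) : Finset R :=
  {a ∈ {x ∈ V | x < v}.image (v - ·) | v + 2 * a ∈ V}

lemma card_middleGaps_le (V : Finset R) (v : R) :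
    #(middleGaps V v) ≤ min #{x ∈ V | x < v} #{x ∈ V | v < x} := by
  refine le_min (card_filter_le _ _ |>.trans card_image_le) ?_
  refine card_le_card_of_injOn (v + 2 * ·) (fun a ha => ?_) fun a _ a' _ h => ?_
  · simp only [middleGaps, mem_coe, mem_filter, mem_image] at ha
    obtain ⟨⟨x, ⟨-, hx⟩, rfl⟩, hmem⟩ := ha
    rw [mem_coe, mem_filter]
    exact ⟨hmem, by linarith⟩
  · simp only at h
    linarith

lemma similarTriples_subset_image (V : Finset R) :
    similarTriples V ⊆
      (V.sigma (middleGaps V)).image fun p => {p.1 - p.2, p.1, p.1 + 2 * p.2} := by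
  intro Q hQ
  simp only [similarTriples, mem_filter, mem_powersetCard] at hQ
  obtain ⟨⟨hQV, -⟩, b, a, ha, rfl⟩ := hQ
  simp only [insert_subset_iff, singleton_subset_iff] at hQV
  obtain ⟨hb, hba, hb3a⟩ := hQV
  refine mem_image.2 ⟨⟨b + a, a⟩, mem_sigma.2 ⟨hba, ?_⟩, ?_⟩
  · simp only [middleGaps, mem_filter, mem_image]
    exact ⟨⟨b, ⟨hb, by linarith⟩, by ring⟩, by convert hb3a using 1; ring⟩
  · show ({b + a - a, b + a, b + a + 2 * a} : Finset R) = _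
    rw [add_sub_cancel_right, show b + a + 2 * a = b + 3 * a by ring]

lemma card_similarTriples_le_sum_range_min (V : Finset R) :
    #(similarTriples V) ≤ ∑ i ∈ range #V, min i (#V - 1 - i) := calc
  #(similarTriples V) ≤ #(V.sigma (middleGaps V)) :=
    (card_le_card (similarTriples_subset_image V)).trans card_image_le
  _ = ∑ v ∈ V, #(middleGaps V v) := card_sigma _ _
  _ ≤ ∑ v ∈ V, min #{x ∈ V | x < v} (#V - 1 - #{x ∈ V | x < v}) :=
    sum_le_sum fun v hv => (card_middleGaps_le V v).trans_eq (by rw [card_filter_gt_eq hv])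
  _ = ∑ i ∈ range #V, min i (#V - 1 - i) :=
    sum_comp_card_filter_lt V fun i => min i (#V - 1 - i)

lemma card_similarTriples_le (V : Finset R) :
    #(similarTriples V) ≤ (#V - #V % 2) * (#V + #V % 2 - 2) / 4 := by
  rw [Nat.le_div_iff_mul_le (by norm_num), ← two_mul_mul_sum_range_sub_mul_succ two_pos,
    ← sum_range_min_eq]
  linarith [card_similarTriples_le_sum_range_min V]

lemma le_card_similarTriples_image_range (n : ℕ) :
    (n - n % 3) * (n + n % 3 - 3) / 6 ≤
      #(similarTriples ((range n).image fun i : ℕ => (i : R))) := by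
  rw [← two_mul_mul_sum_range_sub_mul_succ three_pos]
  refine Nat.div_le_of_le_mul ?_
  suffices h : ∑ a ∈ range n, #(range (n - 3 * (a + 1))) ≤
      #(similarTriples ((range n).image fun i : ℕ => (i : R))) by
    simp only [card_range] at h; omega
  rw [← card_sigma]
  refine card_le_card_of_injOn
    (fun p : (_ : ℕ) × ℕ =>
      ({(p.2 : R), p.2 + (p.1 + 1 : R), p.2 + 3 * (p.1 + 1 : R)} : Finset R))
    (fun ⟨a, b⟩ hp => ?_) fun ⟨a, b⟩ _ ⟨a', b'⟩ _ h => ?_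
  · simp only [mem_coe, mem_sigma, mem_range] at hp
    have hlt : b + 3 * (a + 1) < n := by omega
    have hcast (k : ℕ) (hk : k < n) : (k : R) ∈ (range n).image fun i : ℕ => (i : R) :=
      mem_image_of_mem _ (mem_range.2 hk)
    rw [mem_coe, similarTriples, mem_filter, mem_powersetCard]
    refine ⟨⟨?_, card_triple _ (by positivity)⟩, _, _, by positivity, rfl⟩
    simp only [insert_subset_iff, singleton_subset_iff]
    exact ⟨hcast b (by omega), by exact_mod_cast hcast (b + (a + 1)) (by omega),
      by exact_mod_cast hcast (b + 3 * (a + 1)) hlt⟩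
  · obtain ⟨hb, ha⟩ := eq_of_triple_eq (by positivity) (by positivity) h
    simp only [Nat.cast_inj, add_left_inj] at hb ha
    rw [ha, hb]

end Triples

theorem stmt_19 (n : ℕ) (r s : ℕ) (hr : r = n % 2) (hs : s = n % 3) :
    (∀ V : Finset ℝ, V.card = n →
      ((V.powersetCard 3).filter
          (fun Q => ∃ b a : ℝ, 0 < a ∧ Q = {b, b + a, b + 3 * a})).card
        ≤ (n - r) * (n + r - 2) / 4)
    ∧
    (n - s) * (n + s - 3) / 6 ≤
      ((((Finset.range n).image (fun i => (i : ℝ))).powersetCard 3).filter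
          (fun Q => ∃ b a : ℝ, 0 < a ∧ Q = {b, b + a, b + 3 * a})).card := by
  subst hr hs
  -- `(Finset.range n).image (fun i => (i : ℝ))` elaborates by first coercing `range n` to a
  -- `Finset ℝ` through the monad structure of `Finset`.
  have himage : (Finset.range n >>= fun a => pure (a : ℝ)).image (fun i : ℝ => i) =
      (range n).image (fun i : ℕ => (i : ℝ)) := by
    ext x
    simp [Bind.bind]
  rw [himage]
  exact ⟨fun V hV => hV ▸ card_similarTriples_le V, le_card_similarTriples_image_range n⟩
end
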